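/- arXiv:1212.6104 — 9 statements merged into one kernel-verified Lean document; each statement's English description precedes it below -/
import Mathlib

section
/- There exists a polynomial q with natural-number coefficients such that for every natural number k ≥ 0 and every finite set L with |L| ≥ 2^k, there exists a bipartite graph (L, R, E) such that: |R| = 2^(k+1); every vertex x ∈ L has degree at most q(⌈log₂ |L|⌉) (the bound does not depend on k); and every subset S ⊆ L with |S| ≥ 2^k has at least 2^k neighbors in R, i.e. |E(S)| ≥ 2^k. -/
/-!
Let every vertex of a left side of size `N ≤ 2 ^ n` choose `d = n + 3` neighbours among
`2K` right vertices, `K = 2 ^ k`. Such a choice fails to be a disperser only if all `dK` choices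
of some `K`-set lie in some `(K - 1)`-set. There are at most `C(N, K) C(2K, K - 1) ≤ 2 ^ ((n + 2) K)`
such pairs, each capturing a fraction at most `2 ^ (-dK)` of all choices, so some choice is good.
-/

/-- The set of neighbors of a set `S` of left vertices in the bipartite graph
with edge relation `E`. -/
def nbhd {α β : Type*} (E : Set (α × β)) (S : Set α) : Set β :=
  {y | ∃ x ∈ S, (x, y) ∈ E}

open Finset

theorem Nat.choose_mul_choose_two_mul_lt {N n K : ℕ} (hN : N ≤ 2 ^ n) (hK : 0 < K) :
    N.choose K * (2 * K).choose (K - 1) < 2 ^ (K * (n + 3)) := by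
  calc N.choose K * (2 * K).choose (K - 1)
      ≤ (2 ^ n) ^ K * 2 ^ (2 * K) :=
        Nat.mul_le_mul ((Nat.choose_le_pow _ _).trans (Nat.pow_le_pow_left hN _))
          (Nat.choose_le_two_pow _ _)
    _ = 2 ^ (K * (n + 2)) := by rw [← pow_mul, ← pow_add]; ring_nf
    _ < 2 ^ (K * (n + 3)) := Nat.pow_lt_pow_right (by norm_num) (by nlinarith)

theorem Nat.choose_mul_choose_mul_pow_lt {N n K m : ℕ} (hN : N ≤ 2 ^ n) (hK : 0 < K) :
    N.choose K * (2 * K).choose (K - 1) * ((K - 1) ^ (K * (n + 3)) * (2 * K) ^ m)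
      < (2 * K) ^ (K * (n + 3) + m) := by
  set D := K * (n + 3)
  have hpos : 0 < K ^ D * (2 * K) ^ m := by positivity
  calc N.choose K * (2 * K).choose (K - 1) * ((K - 1) ^ D * (2 * K) ^ m)
      ≤ N.choose K * (2 * K).choose (K - 1) * (K ^ D * (2 * K) ^ m) := by
        gcongr; omega
    _ < 2 ^ D * (K ^ D * (2 * K) ^ m) :=
        Nat.mul_lt_mul_of_pos_right (Nat.choose_mul_choose_two_mul_lt hN hK) hpos
    _ = (2 * K) ^ (D + m) := by rw [← mul_assoc, ← mul_pow, pow_add]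

section UnionBound

variable {X Y : Type*} [Fintype X] [DecidableEq X] [Fintype Y]

theorem Fintype.card_piFinset_ite_mem (A : Finset X) (T : Finset Y) :
    (Fintype.piFinset fun x => if x ∈ A then T else univ).card
      = #T ^ #A * Fintype.card Y ^ (Fintype.card X - #A) := by
  simp only [Fintype.card_piFinset, apply_ite Finset.card, card_univ]
  rw [prod_ite, prod_const, prod_const, filter_mem_eq_inter, univ_inter, filter_not,
    filter_mem_eq_inter, univ_inter, ← compl_eq_univ_sdiff, card_compl]

theorem exists_forall_exists_notMem_of_card_lt [DecidableEq Y] (𝒜 : Finset (Finset X))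
    (𝒯 : Finset (Finset Y)) {a t : ℕ} (h𝒜 : ∀ A ∈ 𝒜, #A = a) (h𝒯 : ∀ T ∈ 𝒯, #T = t)
    (hlt : #𝒜 * #𝒯 * (t ^ a * Fintype.card Y ^ (Fintype.card X - a))
      < Fintype.card Y ^ Fintype.card X) :
    ∃ g : X → Y, ∀ A ∈ 𝒜, ∀ T ∈ 𝒯, ∃ x ∈ A, g x ∉ T := by
  set bad := (𝒜 ×ˢ 𝒯).biUnion fun p => Fintype.piFinset fun x => if x ∈ p.1 then p.2 else univ
  have hbad : #bad < #(univ : Finset (X → Y)) := by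
    refine lt_of_le_of_lt card_biUnion_le ?_
    rw [sum_congr rfl fun p hp => ?_, sum_const, card_product, smul_eq_mul, card_univ,
      Fintype.card_fun]
    · exact hlt
    · rw [mem_product] at hp
      rw [Fintype.card_piFinset_ite_mem, h𝒜 _ hp.1, h𝒯 _ hp.2]
  obtain ⟨g, -, hg⟩ := exists_mem_notMem_of_card_lt_card hbad
  refine ⟨g, fun A hA T hT => ?_⟩
  by_contra! hAT
  refine hg (mem_biUnion.2 ⟨(A, T), mem_product.2 ⟨hA, hT⟩, Fintype.mem_piFinset.2 fun x => ?_⟩)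
  split_ifs with hx
  exacts [hAT x hx, mem_univ _]

end UnionBound

theorem le_card_image_prod_of_forall_exists_notMem {ι κ Y : Type*} [Fintype κ] [Fintype Y]
    [DecidableEq Y] {K : ℕ} {g : ι × κ → Y} (hK : K - 1 ≤ Fintype.card Y)
    (hg : ∀ S : Finset ι, #S = K → ∀ T : Finset Y, #T = K - 1 → ∃ x ∈ S ×ˢ univ, g x ∉ T)
    {S : Finset ι} (hS : K ≤ #S) : K ≤ #(image g (S ×ˢ univ)) := by
  by_contra! hlt
  obtain ⟨S', hS'S, hS'⟩ := exists_subset_card_eq hS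
  have hsmall : #(image g (S' ×ˢ univ)) ≤ K - 1 :=
    calc #(image g (S' ×ˢ univ)) ≤ #(image g (S ×ˢ univ)) := card_le_card (by gcongr)
      _ ≤ K - 1 := by omega
  obtain ⟨T, hT, hTcard⟩ := exists_superset_card_eq hsmall hK
  obtain ⟨x, hx, hgx⟩ := hg S' hS' T hTcard
  exact hgx (hT (mem_image_of_mem g hx))

theorem exists_two_pow_le_card_image {ι : Type*} [Fintype ι] [DecidableEq ι] {k : ℕ}
    (hk : 2 ^ k ≤ Fintype.card ι) :
    ∃ g : ι × Fin (Nat.clog 2 (Fintype.card ι) + 3) → Fin (2 ^ (k + 1)),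
      ∀ S : Finset ι, 2 ^ k ≤ #S → 2 ^ k ≤ #(image g (S ×ˢ univ)) := by
  set N := Fintype.card ι
  set d := Nat.clog 2 N + 3
  set 𝒜 := (powersetCard (2 ^ k) (univ : Finset ι)).image (· ×ˢ (univ : Finset (Fin d)))
  set 𝒯 := powersetCard (2 ^ k - 1) (univ : Finset (Fin (2 ^ (k + 1))))
  have hM : 2 ^ (k + 1) = 2 * 2 ^ k := by ring
  have h𝒜 : ∀ A ∈ 𝒜, #A = 2 ^ k * d := by
    simp only [𝒜, mem_image, mem_powersetCard]
    rintro - ⟨S, ⟨-, hS⟩, rfl⟩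
    simp [card_product, hS]
  have h𝒜card : #𝒜 ≤ N.choose (2 ^ k) := card_image_le.trans (by simp [N])
  have hdN : 2 ^ k * d ≤ N * d := Nat.mul_le_mul_right _ hk
  have hlt : #𝒜 * #𝒯 * ((2 ^ k - 1) ^ (2 ^ k * d)
      * Fintype.card (Fin (2 ^ (k + 1))) ^ (Fintype.card (ι × Fin d) - 2 ^ k * d))
      < Fintype.card (Fin (2 ^ (k + 1))) ^ Fintype.card (ι × Fin d) := by
    simp only [𝒯, card_powersetCard, card_univ, Fintype.card_prod, Fintype.card_fin, hM]
    calc _ ≤ N.choose (2 ^ k) * (2 * 2 ^ k).choose (2 ^ k - 1)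
          * ((2 ^ k - 1) ^ (2 ^ k * d) * (2 * 2 ^ k) ^ (N * d - 2 ^ k * d)) := by gcongr
      _ < (2 * 2 ^ k) ^ (2 ^ k * d + (N * d - 2 ^ k * d)) :=
          Nat.choose_mul_choose_mul_pow_lt (Nat.le_pow_clog one_lt_two N) (by positivity)
      _ = (2 * 2 ^ k) ^ (N * d) := by rw [Nat.add_sub_cancel' hdN]
  obtain ⟨g, hg⟩ := exists_forall_exists_notMem_of_card_lt 𝒜 𝒯 h𝒜
    (fun T hT => (mem_powersetCard.1 hT).2) hlt
  refine ⟨g, fun _ => le_card_image_prod_of_forall_exists_notMem ?_ fun S hS T hT => ?_⟩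
  · simp only [Fintype.card_fin, hM]
    omega
  · exact hg _ (mem_image_of_mem _ (mem_powersetCard.2 ⟨subset_univ _, hS⟩)) T
      (mem_powersetCard.2 ⟨subset_univ _, hT⟩)

theorem nbhd_image_prodMap {α γ β : Type*} (φ : α → γ) (E : Set (α × β)) (S : Set γ) :
    nbhd (Prod.map φ id '' E) S = nbhd E (φ ⁻¹' S) := by
  ext y
  constructor
  · rintro ⟨-, hx, ⟨a, b⟩, hab, ⟨rfl, rfl⟩⟩
    exact ⟨a, hx, hab⟩
  · rintro ⟨a, ha, hay⟩
    exact ⟨φ a, ha, (a, y), hay, rfl⟩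

theorem nbhd_coe_eq_image {ι κ β : Type*} [Fintype κ] [DecidableEq β] (g : ι × κ → β)
    (S : Finset ι) : nbhd {p | ∃ j, g (p.1, j) = p.2} ↑S = ↑(image g (S ×ˢ univ)) := by
  ext y
  simp [nbhd]

theorem exists_disperser {ι : Type*} [Fintype ι] {k : ℕ} (hk : 2 ^ k ≤ Fintype.card ι) :
    ∃ E : Set (ι × Fin (2 ^ (k + 1))),
      (∀ i, (nbhd E {i}).ncard ≤ Nat.clog 2 (Fintype.card ι) + 3) ∧
      ∀ S : Set ι, 2 ^ k ≤ S.ncard → 2 ^ k ≤ (nbhd E S).ncard := by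
  classical
  obtain ⟨g, hg⟩ := exists_two_pow_le_card_image hk
  refine ⟨{p | ∃ j, g (p.1, j) = p.2}, fun i => ?_, fun S hS => ?_⟩
  · rw [← coe_singleton, nbhd_coe_eq_image, Set.ncard_coe_finset]
    exact card_image_le.trans (by simp)
  · obtain ⟨S, rfl⟩ := S.toFinite.exists_finset_coe
    rw [nbhd_coe_eq_image, Set.ncard_coe_finset]
    exact hg S (by rwa [Set.ncard_coe_finset] at hS)

/-- Disperser Lemma: There is a polynomial `q` with natural coefficients
such that for every `k ≥ 0` and finite set `L` with `|L| ≥ 2^k` there is a bipartite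
graph `(L, R, E)` with `|R| = 2^(k+1)`, left degrees at most `q(⌈log₂ |L|⌉)`,
such that every `S ⊆ L` with `|S| ≥ 2^k` satisfies `|E(S)| ≥ 2^k`. -/
theorem stmt_1 :
    ∃ q : Polynomial ℕ, ∀ (k : ℕ) (α : Type) (L : Set α), L.Finite → 2 ^ k ≤ L.ncard →
      ∃ (β : Type) (R : Set β) (E : Set (α × β)),
        R.Finite ∧ R.ncard = 2 ^ (k + 1) ∧
        (∀ p ∈ E, p.1 ∈ L ∧ p.2 ∈ R) ∧
        (∀ x ∈ L, (nbhd E {x}).ncard ≤ q.eval (Nat.clog 2 L.ncard)) ∧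
        (∀ S ⊆ L, 2 ^ k ≤ S.ncard → 2 ^ k ≤ (nbhd E S).ncard) := by
  refine ⟨Polynomial.X + Polynomial.C 3, fun k α L hL hk => ?_⟩
  have := hL.fintype
  have hcard : Fintype.card L = L.ncard := by rw [Fintype.card_eq_nat_card, Nat.card_coe_set_eq]
  obtain ⟨E, hdeg, hexp⟩ := exists_disperser (hcard ▸ hk)
  refine ⟨Fin (2 ^ (k + 1)), Set.univ, Prod.map Subtype.val id '' E, Set.finite_univ,
    by simp, ?_, fun x hx => ?_, fun S hS hkS => ?_⟩
  · rintro _ ⟨⟨x, y⟩, -, rfl⟩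
    exact ⟨x.2, trivial⟩
  · have hx' : Subtype.val ⁻¹' {x} = {(⟨x, hx⟩ : L)} := by ext; simp [Subtype.ext_iff]
    rw [nbhd_image_prodMap Subtype.val, hx', Polynomial.eval_add, Polynomial.eval_X,
      Polynomial.eval_C, ← hcard]
    exact hdeg _
  · rw [nbhd_image_prodMap Subtype.val]
    refine hexp _ ?_
    rwa [Set.ncard_preimage_of_injective_subset_range Subtype.val_injective
      (by rwa [Subtype.range_val])]
end

section
/- There exists a polynomial q with natural-number coefficients such that for every natural number i ≥ 0 and every finite set L with |L| ≥ 2^i, there exists a bipartite graph (L, R, E) such that: |R| = 2^(i+2); every vertex x ∈ L has degree at most q(⌈log₂ |L|⌉) (the bound does not depend on i); and every subset S ⊆ L with |S| ≥ 2^i has at least 2^(i+1) neighbors in R, i.e. |E(S)| ≥ 2^(i+1). -/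
/-!
Give every left vertex `m + 5` neighbours, chosen at random among `4K` right vertices, where
`K = 2^i` and `|L| ≤ 2^m`. A fixed `K`-set `S` has all its `(m + 5)K` edges inside a fixed
`2K`-set `T` with probability `2^(-(m + 5)K)`, and there are at most `2^(mK) · 2^(4K)` pairs
`(S, T)`, so by the union bound some choice makes every `K`-set see more than `2K` vertices.
The union bound is carried out by counting functions `L → Fin (m + 5) → Fin (4K)`.
-/

open Finset Fintype

section Counting

variable {ι δ ρ : Type*} [Fintype ι] [Fintype δ] [Fintype ρ] [DecidableEq ρ]

theorem card_piFinset_ite [DecidableEq ι] {γ : Type*} (S : Finset ι) (A B : Finset γ) :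
    (piFinset fun x => if x ∈ S then A else B).card =
      A.card ^ S.card * B.card ^ (card ι - S.card) := by
  rw [card_piFinset, prod_apply_ite, prod_const, prod_const, filter_mem_eq_inter, univ_inter,
    filter_not, filter_mem_eq_inter, univ_inter, ← compl_eq_univ_sdiff, card_compl]

theorem exists_forall_lt_card_biUnion_image {K t : ℕ} (ht : t ≤ card ρ)
    (hcount : (card ι).choose K * (card ρ).choose t *
        ((t ^ card δ) ^ K * (card ρ ^ card δ) ^ (card ι - K)) < (card ρ ^ card δ) ^ card ι) :
    ∃ F : ι → δ → ρ, ∀ S : Finset ι, S.card = K →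
      t < (S.biUnion fun x => univ.image (F x)).card := by
  classical
  set bad : Finset (ι → δ → ρ) := (univ.powersetCard K ×ˢ univ.powersetCard t).biUnion fun p =>
    piFinset fun x => if x ∈ p.1 then piFinset (fun _ : δ => p.2) else univ
  have hbad : bad.card < (univ : Finset (ι → δ → ρ)).card := by
    refine lt_of_le_of_lt (card_biUnion_le_card_mul _ _
      ((t ^ card δ) ^ K * (card ρ ^ card δ) ^ (card ι - K)) fun p hp => ?_) ?_
    · simp only [mem_product, mem_powersetCard] at hp
      rw [card_piFinset_ite, card_piFinset, prod_const, card_univ, hp.1.2, hp.2.2, card_univ,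
        card_fun]
    · simpa [card_powersetCard, mul_assoc] using hcount
  obtain ⟨F, -, hF⟩ := exists_mem_notMem_of_card_lt_card hbad
  refine ⟨F, fun S hS => ?_⟩
  by_contra! hle
  obtain ⟨T, hST, hT⟩ := exists_superset_card_eq hle ht
  refine hF (mem_biUnion.2 ⟨(S, T), by simp [hS, hT], ?_⟩)
  refine mem_piFinset.2 fun x => ?_
  split_ifs with hx
  · exact mem_piFinset.2 fun c => hST (mem_biUnion.2 ⟨x, hx, mem_image_of_mem _ (mem_univ c)⟩)
  · exact mem_univ _

end Counting

theorem choose_mul_choose_mul_lt {n m K : ℕ} (hK : 0 < K) (hn : n ≤ 2 ^ m) :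
    n.choose K * (4 * K).choose (2 * K) *
        (((2 * K) ^ (m + 5)) ^ K * ((4 * K) ^ (m + 5)) ^ (n - K)) < ((4 * K) ^ (m + 5)) ^ n := by
  rcases lt_or_ge n K with hnK | hKn
  · rw [Nat.choose_eq_zero_of_lt hnK, zero_mul, zero_mul]
    positivity
  have hchoose : n.choose K * (4 * K).choose (2 * K) < (2 ^ (m + 5)) ^ K :=
    calc n.choose K * (4 * K).choose (2 * K)
        ≤ (2 ^ m) ^ K * 2 ^ (4 * K) :=
          Nat.mul_le_mul ((Nat.choose_le_pow n K).trans (Nat.pow_le_pow_left hn K))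
            (Nat.choose_le_two_pow _ _)
      _ = 2 ^ ((m + 4) * K) := by ring
      _ < 2 ^ ((m + 5) * K) := Nat.pow_lt_pow_right (by norm_num) (by nlinarith)
      _ = (2 ^ (m + 5)) ^ K := pow_mul _ _ _
  calc n.choose K * (4 * K).choose (2 * K) *
        (((2 * K) ^ (m + 5)) ^ K * ((4 * K) ^ (m + 5)) ^ (n - K))
      < (2 ^ (m + 5)) ^ K * (((2 * K) ^ (m + 5)) ^ K * ((4 * K) ^ (m + 5)) ^ (n - K)) := by
        gcongr
    _ = ((4 * K) ^ (m + 5)) ^ K * ((4 * K) ^ (m + 5)) ^ (n - K) := by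
        rw [← mul_assoc, ← mul_pow, ← mul_pow, ← mul_assoc]
        norm_num
    _ = ((4 * K) ^ (m + 5)) ^ n := by rw [← pow_add, Nat.add_sub_cancel' hKn]

theorem exists_disperser_s2 {ι : Type*} [Fintype ι] {m K : ℕ} (hK : 0 < K)
    (hι : card ι ≤ 2 ^ m) :
    ∃ F : ι → Fin (m + 5) → Fin (4 * K), ∀ S : Finset ι, K ≤ S.card →
      2 * K < (S.biUnion fun x => univ.image (F x)).card := by
  obtain ⟨F, hF⟩ := exists_forall_lt_card_biUnion_image (ι := ι) (δ := Fin (m + 5))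
    (ρ := Fin (4 * K)) (K := K) (t := 2 * K) (by rw [Fintype.card_fin]; omega)
    (by simpa using choose_mul_choose_mul_lt hK hι)
  refine ⟨F, fun S hS => ?_⟩
  obtain ⟨S', hS'S, hS'⟩ := exists_subset_card_eq hS
  exact (hF S' hS').trans_le (card_le_card (biUnion_subset_biUnion_of_subset_left _ hS'S))

section Graph

variable {α β γ : Type*} {L : Set α}

def graphOf (L : Set α) (F : L → γ → β) : Set (α × β) :=
  {p | ∃ h : p.1 ∈ L, ∃ c, F ⟨p.1, h⟩ c = p.2}

theorem nbhd_graphOf_singleton (F : L → γ → β) {x : α} (hx : x ∈ L) :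
    nbhd (graphOf L F) {x} = Set.range (F ⟨x, hx⟩) := by
  ext y
  simp [nbhd, graphOf, hx]

theorem nbhd_graphOf_image_val [DecidableEq β] [Fintype γ] (F : L → γ → β) (T : Finset L) :
    nbhd (graphOf L F) (Subtype.val '' (T : Set L)) =
      ↑(T.biUnion fun x => univ.image (F x)) := by
  ext y
  simp only [nbhd, graphOf, Set.mem_image, Finset.mem_coe, Finset.coe_biUnion, Set.mem_iUnion,
    coe_image, coe_univ, Set.image_univ, Set.mem_range, Set.mem_ofPred_eq]
  constructor
  · rintro ⟨-, ⟨x, hxT, rfl⟩, _, c, hc⟩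
    exact ⟨x, hxT, c, hc⟩
  · rintro ⟨x, hxT, c, rfl⟩
    exact ⟨x, ⟨x, hxT, rfl⟩, x.2, c, rfl⟩

end Graph

/-- variant disperser: There is a polynomial `q` with natural coefficients
such that for every `i ≥ 0` and finite set `L` with `|L| ≥ 2^i` there is a bipartite
graph `(L, R, E)` with `|R| = 2^(i+2)`, left degrees at most `q(⌈log₂ |L|⌉)`,
such that every `S ⊆ L` with `|S| ≥ 2^i` satisfies `|E(S)| ≥ 2^(i+1)`. -/
theorem stmt_2 :
    ∃ q : Polynomial ℕ, ∀ (i : ℕ) (α : Type) (L : Set α), L.Finite → 2 ^ i ≤ L.ncard →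
      ∃ (β : Type) (R : Set β) (E : Set (α × β)),
        R.Finite ∧ R.ncard = 2 ^ (i + 2) ∧
        (∀ p ∈ E, p.1 ∈ L ∧ p.2 ∈ R) ∧
        (∀ x ∈ L, (nbhd E {x}).ncard ≤ q.eval (Nat.clog 2 L.ncard)) ∧
        (∀ S ⊆ L, 2 ^ i ≤ S.ncard → 2 ^ (i + 1) ≤ (nbhd E S).ncard) := by
  classical
  refine ⟨Polynomial.X + Polynomial.C 5, fun i α L hL hiL => ?_⟩
  have : Fintype L := hL.fintype
  obtain ⟨F, hF⟩ := exists_disperser_s2 (ι := L) (m := Nat.clog 2 L.ncard) (pow_pos two_pos i)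
    (by rw [← Nat.card_eq_fintype_card, Nat.card_coe_set_eq]; exact Nat.le_pow_clog one_lt_two _)
  refine ⟨Fin (4 * 2 ^ i), Set.univ, graphOf L F, Set.finite_univ, by simp [pow_add, mul_comm],
    fun p ⟨hp, _⟩ => ⟨hp, trivial⟩, fun x hx => ?_, fun S hSL hiS => ?_⟩
  · rw [nbhd_graphOf_singleton F hx, ← Set.image_univ]
    simpa using Set.ncard_image_le (f := F ⟨x, hx⟩) (s := Set.univ)
  · set T := (Subtype.val ⁻¹' S : Set L).toFinset
    have hTS : Subtype.val '' (T : Set L) = S := by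
      simp [T, Subtype.image_preimage_coe, Set.inter_eq_right.2 hSL]
    have hT : T.card = S.ncard := by
      rw [← Set.ncard_coe_finset, ← hTS, Set.ncard_image_of_injective _ Subtype.val_injective]
    rw [← hTS, nbhd_graphOf_image_val, Set.ncard_coe_finset, pow_succ']
    exact (hF T (hT ▸ hiS)).le
end

section
/- Let L be a set, let k ≥ 0 be a natural number, and for each i ∈ {0, 1, …, k} let R_i be a finite set, with the R_i pairwise disjoint, and let E_i ⊆ L × R_i be an edge relation such that every finite subset S ⊆ L with |S| ≥ 2^i satisfies |E_i(S)| ≥ 2^(i+1). Let E = ⋃_{i=0}^{k} E_i, viewed as a relation between L and R = ⋃_{i=0}^{k} R_i. Then every finite nonempty subset S ⊆ L with |S| ≤ 2^k satisfies |E(S)| > |S|. -/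
/-- merging dispersers into an expander: if for each `i ∈ {0,…,k}` the
relation `E i ⊆ L × R i` (with the `R i` finite and pairwise disjoint) sends every
finite `S ⊆ L` with `|S| ≥ 2^i` to at least `2^(i+1)` neighbors, then the union
relation sends every finite nonempty `S` with `|S| ≤ 2^k` to more than `|S|`
neighbors. -/
theorem stmt_3 {α β : Type} (k : ℕ)
    (R : Fin (k + 1) → Set β) (hRfin : ∀ i, (R i).Finite)
    (hdisj : ∀ i j, i ≠ j → Disjoint (R i) (R j))
    (E : Fin (k + 1) → Set (α × β))
    (hE : ∀ i, ∀ p ∈ E i, p.2 ∈ R i)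
    (hdisp : ∀ (i : Fin (k + 1)) (S : Set α), S.Finite → 2 ^ (i : ℕ) ≤ S.ncard →
      2 ^ ((i : ℕ) + 1) ≤ (nbhd (E i) S).ncard) :
    ∀ S : Set α, S.Finite → S.Nonempty → S.ncard ≤ 2 ^ k →
      S.ncard < (nbhd (⋃ i, E i) S).ncard := by
  intro S hSfin hSne hSle
  set n := S.ncard with hn
  have hn0 : n ≠ 0 := by
    simp [hn, Set.ncard_eq_zero hSfin, Set.nonempty_iff_ne_empty.mp hSne]
  set i := Nat.log 2 n with hi
  have hik : i ≤ k := by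
    calc i ≤ Nat.log 2 (2 ^ k) := Nat.log_mono_right hSle
    _ = k := Nat.log_pow (b := 2) (by norm_num) k
  have hlow : 2 ^ i ≤ n := Nat.pow_log_le_self 2 hn0
  have hhigh : n < 2 ^ (i + 1) := Nat.lt_pow_succ_log_self (by norm_num) n
  set I : Fin (k + 1) := ⟨i, Nat.lt_succ_of_le hik⟩ with hI
  have h1 : 2 ^ (i + 1) ≤ (nbhd (E I) S).ncard := hdisp I S hSfin hlow
  have hsub : nbhd (E I) S ⊆ nbhd (⋃ j, E j) S := by
    rintro y ⟨x, hx, hxy⟩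
    exact ⟨x, hx, Set.mem_iUnion.mpr ⟨I, hxy⟩⟩
  have hRfin' : (⋃ j, R j).Finite := Set.finite_iUnion hRfin
  have hfin : (nbhd (⋃ j, E j) S).Finite := by
    refine hRfin'.subset ?_
    rintro y ⟨x, hx, hxy⟩
    obtain ⟨j, hj⟩ := Set.mem_iUnion.mp hxy
    exact Set.mem_iUnion.mpr ⟨j, hE j _ hj⟩
  calc n < 2 ^ (i + 1) := hhigh
  _ ≤ (nbhd (E I) S).ncard := h1
  _ ≤ (nbhd (⋃ j, E j) S).ncard := Set.ncard_le_ncard hsub hfin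
end

section
/- There exists a polynomial q with natural-number coefficients such that for every natural number k ≥ 0 and every finite set L with |L| ≥ 2^k, there exists a bipartite graph (L, R, E) such that: |R| < 2^(k+3); every vertex x ∈ L has degree at most q(⌈log₂ |L|⌉) (the bound does not depend on k); and every subset S ⊆ L with |S| ≤ 2^k has at least |S| neighbors in R, i.e. |E(S)| ≥ |S|. -/
set_option maxHeartbeats 1000000

private lemma sum_div_four_le (A : ℕ) : ∀ K : ℕ, (∑ s ∈ Finset.Icc 1 K, A / 4 ^ s) + A / 4 ^ K ≤ A := by
  intro K
  induction K with
  | zero => simp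
  | succ K ih =>
    rw [Finset.sum_Icc_succ_top (by omega)]
    have h4 : A / 4 ^ (K + 1) = (A / 4 ^ K) / 4 := by
      rw [pow_succ, ← Nat.div_div_eq_div_mul]
    rw [h4]
    generalize hx : A / 4 ^ K = x at ih ⊢
    omega

private lemma badFor_card (k m : ℕ) (V : Type) [Fintype V] [DecidableEq V] (S : Finset V)
    (T : Finset (Fin (2^(k+2)))) :
    (Finset.univ.filter (fun g : V → Fin (2*m+2) → Fin (2^(k+2)) => ∀ x ∈ S, ∀ i, g x i ∈ T)).card
      = (T.card ^ (2*m+2)) ^ S.card * ((2^(k+2)) ^ (2*m+2)) ^ (Fintype.card V - S.card) := by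
  classical
  have heq : (Finset.univ.filter (fun g : V → Fin (2*m+2) → Fin (2^(k+2)) => ∀ x ∈ S, ∀ i, g x i ∈ T))
      = Fintype.piFinset (fun x => if x ∈ S then Fintype.piFinset (fun _ : Fin (2*m+2) => T) else Finset.univ) := by
    ext g
    simp only [Finset.mem_filter, Finset.mem_univ, true_and, Fintype.mem_piFinset]
    constructor
    · intro h x
      by_cases hx : x ∈ S
      · simp only [hx, if_true, Fintype.mem_piFinset]
        exact h x hx
      · simp [hx]
    · intro h x hx i
      have := h x
      rw [if_pos hx, Fintype.mem_piFinset] at this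
      exact this i
  rw [heq, Fintype.card_piFinset]
  have hc : ∀ x : V, (if x ∈ S then Fintype.piFinset (fun _ : Fin (2*m+2) => T) else Finset.univ).card
      = if x ∈ S then T.card ^ (2*m+2) else (2^(k+2)) ^ (2*m+2) := by
    intro x
    split_ifs
    · rw [Fintype.card_piFinset]; simp
    · simp [Finset.card_univ, Fintype.card_fun]
  rw [Finset.prod_congr rfl (fun x _ => hc x)]
  rw [Finset.prod_ite, Finset.prod_const, Finset.prod_const]
  congr 1
  · congr 1; simp
  · congr 1
    rw [Finset.filter_not, Finset.card_sdiff_of_subset (Finset.filter_subset _ _)]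
    simp [Finset.card_univ]

private lemma counting (k m : ℕ) (V : Type) [Fintype V] [DecidableEq V]
    (hup : Fintype.card V ≤ 2 ^ m) (hlo : 2 ^ k ≤ Fintype.card V) :
    ∃ g : V → Fin (2*m+2) → Fin (2^(k+2)),
      ∀ S : Finset V, S.card ≤ 2^k →
        S.card ≤ ((S ×ˢ Finset.univ).image (fun p : V × Fin (2*m+2) => g p.1 p.2)).card := by
  classical
  letI : DecidableEq (V → Fin (2*m+2) → Fin (2^(k+2))) := Classical.decEq _
  have hkm : k ≤ m := by
    have := hlo.trans hup
    exact (Nat.pow_le_pow_iff_right (by norm_num)).1 this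
  -- the bad set
  let Γ : (V → Fin (2*m+2) → Fin (2^(k+2))) → Finset V → Finset (Fin (2^(k+2))) :=
    fun g S => (S ×ˢ Finset.univ).image (fun p : V × Fin (2*m+2) => g p.1 p.2)
  let Bad : Finset (V → Fin (2*m+2) → Fin (2^(k+2))) :=
    Finset.univ.filter (fun g => ∃ S : Finset V, S.Nonempty ∧ S.card ≤ 2^k ∧ (Γ g S).card < S.card)
  let 𝒮 : Finset (Finset V) :=
    Finset.univ.powerset.filter (fun S : Finset V => S.Nonempty ∧ S.card ≤ 2^k)
  have hΓ : Γ = fun g S => (S ×ˢ Finset.univ).image (fun p : V × Fin (2*m+2) => g p.1 p.2) := rfl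
  have hBad : Bad = Finset.univ.filter (fun g => ∃ S : Finset V, S.Nonempty ∧ S.card ≤ 2^k ∧ (Γ g S).card < S.card) := rfl
  have h𝒮def : 𝒮 = Finset.univ.powerset.filter (fun S : Finset V => S.Nonempty ∧ S.card ≤ 2^k) := rfl
  -- Step B : Bad is covered by the union
  have hsub : Bad ⊆ 𝒮.biUnion (fun S =>
      (Finset.powersetCard (S.card - 1) (Finset.univ : Finset (Fin (2^(k+2))))).biUnion
        (fun T => Finset.univ.filter (fun g => ∀ x ∈ S, ∀ i, g x i ∈ T))) := by
    intro g hg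
    rw [hBad, Finset.mem_filter] at hg
    obtain ⟨-, S, hSne, hSk, hSΓ⟩ := hg
    have hΓle : (Γ g S).card ≤ S.card - 1 := by omega
    have hle : S.card - 1 ≤ Fintype.card (Fin (2^(k+2))) := by
      simp only [Fintype.card_fin]
      have : S.card ≤ 2^k := hSk
      have : (2:ℕ)^k ≤ 2^(k+2) := Nat.pow_le_pow_right (by norm_num) (by omega)
      omega
    obtain ⟨T, hTsub, hTcard⟩ := Finset.exists_superset_card_eq hΓle hle
    rw [Finset.mem_biUnion]
    refine ⟨S, ?_, ?_⟩
    · rw [h𝒮def, Finset.mem_filter]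
      exact ⟨Finset.mem_powerset.2 (Finset.subset_univ S), hSne, hSk⟩
    rw [Finset.mem_biUnion]
    refine ⟨T, ?_, ?_⟩
    · rw [Finset.mem_powersetCard]
      exact ⟨Finset.subset_univ T, hTcard⟩
    rw [Finset.mem_filter]
    refine ⟨Finset.mem_univ g, fun x hx i => hTsub ?_⟩
    rw [hΓ]
    exact Finset.mem_image.2 ⟨(x, i), Finset.mem_product.2 ⟨hx, Finset.mem_univ i⟩, rfl⟩
  -- bound on the cardinality
  have step1 : Bad.card ≤ ∑ S ∈ 𝒮, ((2^(k+2)).choose (S.card - 1)) *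
      (((S.card - 1) ^ (2*m+2)) ^ S.card * ((2^(k+2)) ^ (2*m+2)) ^ (Fintype.card V - S.card)) := by
    refine le_trans (Finset.card_le_card hsub) ?_
    refine le_trans Finset.card_biUnion_le ?_
    refine Finset.sum_le_sum (fun S _ => ?_)
    refine le_trans Finset.card_biUnion_le (le_of_eq ?_)
    have heach : ∀ T ∈ Finset.powersetCard (S.card - 1) (Finset.univ : Finset (Fin (2^(k+2)))),
        (Finset.univ.filter (fun g : V → Fin (2*m+2) → Fin (2^(k+2)) => ∀ x ∈ S, ∀ i, g x i ∈ T)).card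
          = ((S.card - 1) ^ (2*m+2)) ^ S.card * ((2^(k+2)) ^ (2*m+2)) ^ (Fintype.card V - S.card) := by
      intro T hT
      have hTc : T.card = S.card - 1 := (Finset.mem_powersetCard.1 hT).2
      rw [badFor_card k m V S T, hTc]
    rw [Finset.sum_congr rfl heach, Finset.sum_const, Finset.card_powersetCard,
      Finset.card_univ, Fintype.card_fin, smul_eq_mul]
  -- regroup by cardinality
  have hSeq : 𝒮 = (Finset.Icc 1 (2^k)).biUnion (fun s => Finset.powersetCard s Finset.univ) := by
    ext S
    simp only [h𝒮def, Finset.mem_filter, Finset.mem_powerset, Finset.mem_biUnion,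
      Finset.mem_Icc, Finset.mem_powersetCard, Finset.subset_univ, true_and,
      true_and]
    constructor
    · rintro ⟨h1, h2⟩
      exact ⟨S.card, ⟨Finset.card_pos.2 h1, h2⟩, rfl⟩
    · rintro ⟨s, ⟨h1, h2⟩, rfl⟩
      exact ⟨Finset.card_pos.1 h1, h2⟩
  have hdisj : (↑(Finset.Icc 1 (2^k)) : Set ℕ).PairwiseDisjoint
      (fun s => Finset.powersetCard s (Finset.univ : Finset V)) := by
    intro a _ b _ hab
    simp only [Finset.disjoint_left, Finset.mem_powersetCard]
    rintro S ⟨-, hSa⟩ ⟨-, hSb⟩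
    exact hab (hSa ▸ hSb ▸ rfl)
  have step2 : ∑ S ∈ 𝒮, ((2^(k+2)).choose (S.card - 1)) *
      (((S.card - 1) ^ (2*m+2)) ^ S.card * ((2^(k+2)) ^ (2*m+2)) ^ (Fintype.card V - S.card))
      = ∑ s ∈ Finset.Icc 1 (2^k), (Fintype.card V).choose s * (((2^(k+2)).choose (s - 1)) *
          (((s - 1) ^ (2*m+2)) ^ s * ((2^(k+2)) ^ (2*m+2)) ^ (Fintype.card V - s))) := by
    rw [hSeq, Finset.sum_biUnion hdisj]
    refine Finset.sum_congr rfl (fun s _ => ?_)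
    have heach : ∀ S ∈ Finset.powersetCard s (Finset.univ : Finset V),
        ((2^(k+2)).choose (S.card - 1)) *
          (((S.card - 1) ^ (2*m+2)) ^ S.card * ((2^(k+2)) ^ (2*m+2)) ^ (Fintype.card V - S.card))
          = ((2^(k+2)).choose (s - 1)) *
          (((s - 1) ^ (2*m+2)) ^ s * ((2^(k+2)) ^ (2*m+2)) ^ (Fintype.card V - s)) := by
      intro S hS
      rw [(Finset.mem_powersetCard.1 hS).2]
    rw [Finset.sum_congr rfl heach, Finset.sum_const, Finset.card_powersetCard,
      Finset.card_univ, smul_eq_mul]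
  -- per-s bound
  have step3 : ∀ s ∈ Finset.Icc 1 (2^k), (Fintype.card V).choose s * (((2^(k+2)).choose (s - 1)) *
      (((s - 1) ^ (2*m+2)) ^ s * ((2^(k+2)) ^ (2*m+2)) ^ (Fintype.card V - s)))
      ≤ (2^((k+2)*(2*m+2)*Fintype.card V)) / 4 ^ s := by
    intro s hs
    rw [Finset.mem_Icc] at hs
    obtain ⟨hs1, hsk⟩ := hs
    have hsn : s ≤ Fintype.card V := hsk.trans hlo
    rw [Nat.le_div_iff_mul_le (by positivity)]
    have h1 : (Fintype.card V).choose s ≤ 2 ^ (m * s) := by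
      calc (Fintype.card V).choose s ≤ (Fintype.card V) ^ s := Nat.choose_le_pow _ s
        _ ≤ (2 ^ m) ^ s := Nat.pow_le_pow_left hup s
        _ = 2 ^ (m * s) := by rw [← pow_mul]
    have h2 : (2^(k+2)).choose (s - 1) ≤ 2 ^ ((k+2) * s) := by
      calc (2^(k+2)).choose (s - 1) ≤ (2^(k+2)) ^ (s - 1) := Nat.choose_le_pow _ (s - 1)
        _ ≤ (2^(k+2)) ^ s := Nat.pow_le_pow_right (by positivity) (by omega)
        _ = 2 ^ ((k+2) * s) := by rw [← pow_mul]
    have h3 : ((s - 1) ^ (2*m+2)) ^ s ≤ 2 ^ (k * ((2*m+2) * s)) := by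
      calc ((s - 1) ^ (2*m+2)) ^ s ≤ ((2 ^ k) ^ (2*m+2)) ^ s := by
            apply Nat.pow_le_pow_left
            apply Nat.pow_le_pow_left
            omega
        _ = 2 ^ (k * ((2*m+2) * s)) := by rw [← pow_mul, ← pow_mul]
    have h4 : ((2^(k+2)) ^ (2*m+2)) ^ (Fintype.card V - s) = 2 ^ ((k+2) * (2*m+2) * (Fintype.card V - s)) := by
      rw [← pow_mul, ← pow_mul, ← mul_assoc]
    have h5 : (4:ℕ) ^ s = 2 ^ (2 * s) := by
      rw [pow_mul]; norm_num
    refine le_trans (le_of_le_of_eq (Nat.mul_le_mul (Nat.mul_le_mul h1 (Nat.mul_le_mul h2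
      (Nat.mul_le_mul h3 (le_of_eq h4)))) (le_of_eq h5))
      (by rw [← pow_add, ← pow_add, ← pow_add, ← pow_add])) ?_
    apply Nat.pow_le_pow_right (by norm_num)
    have hsplit : (k+2) * (2*m+2) * Fintype.card V
        = (k+2) * (2*m+2) * s + (k+2) * (2*m+2) * (Fintype.card V - s) := by
      rw [← Nat.mul_add, Nat.add_sub_cancel' hsn]
    rw [hsplit]
    have hkey : m * s + (k+2) * s + 2 * s + k * ((2*m+2) * s) ≤ (k+2) * (2*m+2) * s := by
      have e1 : (k+2) * (2*m+2) * s = k * ((2*m+2) * s) + 2 * ((2*m+2) * s) := by ring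
      rw [e1]
      have e3 : (m + (k + 2) + 2) * s ≤ 2 * ((2*m+2) * s) := by
        have hc : m + (k + 2) + 2 ≤ 2 * (2*m+2) := by omega
        calc (m + (k + 2) + 2) * s ≤ (2 * (2*m+2)) * s := Nat.mul_le_mul_right s hc
          _ = 2 * ((2*m+2) * s) := by ring
      have e2 : m * s + (k+2) * s + 2 * s = (m + (k + 2) + 2) * s := by ring
      omega
    omega
  have hMpos : 1 ≤ (2^((k+2)*(2*m+2)*Fintype.card V)) / 4 ^ (2^k) := by
    rw [Nat.le_div_iff_mul_le (by positivity), one_mul]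
    have h44 : (4:ℕ) ^ (2^k) = 2 ^ (2 * 2^k) := by rw [pow_mul]; norm_num
    rw [h44]
    apply Nat.pow_le_pow_right (by norm_num)
    have h2k : 2 ^ k ≤ Fintype.card V := hlo
    calc 2 * 2^k ≤ 2 * Fintype.card V := by omega
      _ ≤ ((k+2) * (2*m+2)) * Fintype.card V := by
          apply Nat.mul_le_mul_right
          calc 2 = 2 * 1 := by norm_num
            _ ≤ (k+2) * (2*m+2) := Nat.mul_le_mul (by omega) (by omega)
  have hBadlt : Bad.card < 2^((k+2)*(2*m+2)*Fintype.card V) := by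
    have ha := le_trans step1 (le_of_eq step2)
    have hb := le_trans ha (Finset.sum_le_sum step3)
    have hc := sum_div_four_le (2^((k+2)*(2*m+2)*Fintype.card V)) (2^k)
    omega
  have hcardΩ : Fintype.card (V → Fin (2*m+2) → Fin (2^(k+2)))
      = 2^((k+2)*(2*m+2)*Fintype.card V) := by
    rw [Fintype.card_fun, Fintype.card_fun, Fintype.card_fin, Fintype.card_fin,
      ← pow_mul, ← pow_mul, ← mul_assoc]
  have hex : ∃ g : V → Fin (2*m+2) → Fin (2^(k+2)), g ∉ Bad := by
    by_contra h
    push_neg at h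
    have heq : Bad = Finset.univ := Finset.eq_univ_iff_forall.2 h
    rw [heq, Finset.card_univ, hcardΩ] at hBadlt
    omega
  obtain ⟨g, hg⟩ := hex
  refine ⟨g, fun S hSk => ?_⟩
  by_cases hSne : S.Nonempty
  · by_contra hlt
    push_neg at hlt
    apply hg
    rw [hBad, Finset.mem_filter]
    exact ⟨Finset.mem_univ g, S, hSne, hSk, hlt⟩
  · rw [Finset.not_nonempty_iff_eq_empty] at hSne
    simp [hSne]

/-- Expander Lemma: There is a polynomial `q` with natural coefficients
such that for every `k ≥ 0` and finite set `L` with `|L| ≥ 2^k` there is a bipartite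
graph `(L, R, E)` with `|R| < 2^(k+3)`, left degrees at most `q(⌈log₂ |L|⌉)`,
such that every `S ⊆ L` with `|S| ≤ 2^k` satisfies `|E(S)| ≥ |S|`. -/
theorem stmt_4 :
    ∃ q : Polynomial ℕ, ∀ (k : ℕ) (α : Type) (L : Set α), L.Finite → 2 ^ k ≤ L.ncard →
      ∃ (β : Type) (R : Set β) (E : Set (α × β)),
        R.Finite ∧ R.ncard < 2 ^ (k + 3) ∧
        (∀ p ∈ E, p.1 ∈ L ∧ p.2 ∈ R) ∧
        (∀ x ∈ L, (nbhd E {x}).ncard ≤ q.eval (Nat.clog 2 L.ncard)) ∧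
        (∀ S ⊆ L, S.ncard ≤ 2 ^ k → S.ncard ≤ (nbhd E S).ncard) := by
  refine ⟨Polynomial.C 2 * Polynomial.X + Polynomial.C 2, ?_⟩
  intro k α L hfin hN
  classical
  set m := Nat.clog 2 L.ncard with hm
  have hqeval : (Polynomial.C 2 * Polynomial.X + Polynomial.C 2 : Polynomial ℕ).eval m = 2*m+2 := by
    simp
  set V := hfin.toFinset with hV
  have hcardV : Fintype.card ↥V = L.ncard := by
    rw [Fintype.card_coe, hV, ← Set.ncard_eq_toFinset_card L hfin]
  have hup : Fintype.card ↥V ≤ 2 ^ m := by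
    rw [hcardV, hm]
    exact Nat.le_pow_clog (by norm_num) _
  have hlo : 2 ^ k ≤ Fintype.card ↥V := by rw [hcardV]; exact hN
  obtain ⟨g, hg⟩ := counting k m ↥V hup hlo
  refine ⟨Fin (2^(k+2)), Set.univ,
    {p : α × Fin (2^(k+2)) | ∃ h : p.1 ∈ V, ∃ i, g ⟨p.1, h⟩ i = p.2},
    Set.finite_univ, ?_, ?_, ?_, ?_⟩
  · rw [Set.ncard_univ, Nat.card_eq_fintype_card, Fintype.card_fin]
    exact Nat.pow_lt_pow_right (by norm_num) (by omega)
  · rintro p ⟨h, -⟩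
    exact ⟨hfin.mem_toFinset.1 h, Set.mem_univ _⟩
  · intro x hx
    have hx' : x ∈ V := hfin.mem_toFinset.2 hx
    have hsub : nbhd {p : α × Fin (2^(k+2)) | ∃ h : p.1 ∈ V, ∃ i, g ⟨p.1, h⟩ i = p.2} {x}
        ⊆ Set.range (g ⟨x, hx'⟩) := by
      rintro y ⟨x0, hx0, hE⟩
      rw [Set.mem_singleton_iff] at hx0
      subst hx0
      obtain ⟨h, i, hi⟩ := hE
      exact ⟨i, hi⟩
    rw [hqeval]
    refine le_trans (Set.ncard_le_ncard hsub (Set.finite_range _)) ?_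
    rw [← Set.image_univ]
    refine le_trans (Set.ncard_image_le (Set.finite_univ)) ?_
    rw [Set.ncard_univ, Nat.card_eq_fintype_card, Fintype.card_fin]
  · intro S hSL hScard
    have hSfin : S.Finite := hfin.subset hSL
    set Sf : Finset ↥V := Finset.univ.filter (fun v => ↑v ∈ S) with hSf
    have himg : Sf.image (Subtype.val) = hSfin.toFinset := by
      ext y
      simp only [Finset.mem_image, hSf, Finset.mem_filter, Finset.mem_univ, true_and,
        Set.Finite.mem_toFinset]
      constructor
      · rintro ⟨v, hv, rfl⟩; exact hv
      · intro hy
        exact ⟨⟨y, hfin.mem_toFinset.2 (hSL hy)⟩, hy, rfl⟩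
    have hcardSf : Sf.card = S.ncard := by
      rw [Set.ncard_eq_toFinset_card S hSfin, ← himg,
        Finset.card_image_of_injective _ Subtype.val_injective]
    have hΓeq : nbhd {p : α × Fin (2^(k+2)) | ∃ h : p.1 ∈ V, ∃ i, g ⟨p.1, h⟩ i = p.2} S
        = ↑((Sf ×ˢ Finset.univ).image (fun p : ↥V × Fin (2*m+2) => g p.1 p.2)) := by
      ext y
      simp only [nbhd, Set.mem_setOf_eq, Finset.coe_image, Set.mem_image, Finset.mem_coe,
        Finset.mem_product, Finset.mem_univ, and_true]
      constructor
      · rintro ⟨x, hxS, h, i, hi⟩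
        refine ⟨(⟨x, h⟩, i), ?_, hi⟩
        simp [hSf, hxS]
      · rintro ⟨⟨v, i⟩, hv, hi⟩
        simp only [hSf, Finset.mem_filter, Finset.mem_univ, true_and] at hv
        exact ⟨↑v, hv, v.2, i, by simpa using hi⟩
    rw [hΓeq, Set.ncard_coe_finset, ← hcardSf]
    exact hg Sf (hcardSf ▸ hScard)
end

section
/- Let K be a natural number, let L, M, R be sets, let A ⊆ L × M satisfy: every finite subset S ⊆ L with |S| ≥ K has |A(S)| ≥ K, and let B ⊆ M × R satisfy: every subset T ⊆ M with |T| ≥ K and T ⊆ A(L) finite has |B(T)| ≥ K. Define the composed relation E = {(x, y) ∈ L × R : ∃ z ∈ M, (x, z) ∈ A and (z, y) ∈ B}. Then every finite subset S ⊆ L with |S| ≥ K satisfies |E(S)| ≥ K. -/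
/-- composition step: if `A ⊆ L × M` sends every finite `S` with
`|S| ≥ K` to at least `K` neighbors, and `B ⊆ M × R` sends every finite
`T ⊆ A(L)` with `|T| ≥ K` to at least `K` neighbors, then the composed relation
`E = {(x,y) : ∃ z, (x,z) ∈ A ∧ (z,y) ∈ B}` sends every finite `S` with `|S| ≥ K`
to at least `K` neighbors. -/
theorem stmt_6 {α β γ : Type} (K : ℕ)
    (A : Set (α × β)) (B : Set (β × γ))
    (hA : ∀ S : Set α, S.Finite → K ≤ S.ncard → K ≤ (nbhd A S).ncard)
    (hB : ∀ T : Set β, T.Finite → T ⊆ nbhd A Set.univ → K ≤ T.ncard →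
      K ≤ (nbhd B T).ncard) :
    ∀ S : Set α, S.Finite → K ≤ S.ncard →
      K ≤ (nbhd {p : α × γ | ∃ z : β, (p.1, z) ∈ A ∧ (z, p.2) ∈ B} S).ncard := by
  intro S hSfin hSK
  rcases Nat.eq_zero_or_pos K with hK | hK
  · simp [hK]
  have hAS : K ≤ (nbhd A S).ncard := hA S hSfin hSK
  have hfin : (nbhd A S).Finite := by
    by_contra h
    rw [Set.Infinite.ncard h] at hAS
    omega
  have hsub : nbhd A S ⊆ nbhd A Set.univ := fun y ⟨x, _, hx⟩ => ⟨x, trivial, hx⟩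
  have hkey := hB (nbhd A S) hfin hsub hAS
  have heq : nbhd B (nbhd A S) =
      nbhd {p : α × γ | ∃ z : β, (p.1, z) ∈ A ∧ (z, p.2) ∈ B} S := by
    ext y
    constructor
    · rintro ⟨z, ⟨x, hxS, hxz⟩, hzy⟩
      exact ⟨x, hxS, ⟨z, hxz, hzy⟩⟩
    · rintro ⟨x, hxS, ⟨z, hxz, hzy⟩⟩
      exact ⟨z, ⟨x, hxS, hxz⟩, hzy⟩
  rwa [heq] at hkey
end

section
/- There exists a polynomial q with natural-number coefficients such that for every natural number k ≥ 0 there exists a bipartite graph (L, R, E) where: L is the set of all binary strings of length at least k; R is a finite set of cardinality 2^(k+1); every vertex x ∈ L has degree at most q(|x|), where the polynomial q does not depend on k; and every finite subset S ⊆ L with |S| ≥ 2^k has at least 2^k neighbors in R, i.e. |E(S)| ≥ 2^k. -/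
open Finset

lemma Finset.sum_powersetCard_prod_le_pow {ι R : Type*} [DecidableEq ι] [CommSemiring R]
    [PartialOrder R] [IsOrderedRing R] (s : Finset ι) {w : ι → R} (hw : ∀ x, 0 ≤ w x) (m : ℕ) :
    ∑ A ∈ s.powersetCard m, ∏ x ∈ A, w x ≤ (∑ x ∈ s, w x) ^ m := by
  induction s using Finset.induction_on generalizing m with
  | empty =>
    rcases m with _ | n
    · simp
    · rw [powersetCard_eq_empty.2 (by simp)]
      simp
  | insert a s ha ih =>
    rcases m with _ | n
    · simp
    have hS : 0 ≤ ∑ x ∈ s, w x := sum_nonneg fun x _ => hw x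
    have haB : ∀ B ∈ s.powersetCard n, a ∉ B := fun B hB haB =>
      ha ((mem_powersetCard.1 hB).1 haB)
    have hinj : Set.InjOn (insert a) (s.powersetCard n : Set (Finset ι)) := fun A hA B hB h => by
      rw [← erase_insert (haB A hA), h, erase_insert (haB B hB)]
    have hdisj : Disjoint (s.powersetCard (n + 1)) ((s.powersetCard n).image (insert a)) := by
      simp only [disjoint_left, mem_image, mem_powersetCard]
      rintro A ⟨hAs, -⟩ ⟨B, -, rfl⟩
      exact ha (hAs (mem_insert_self a B))
    rw [powersetCard_succ_insert ha, sum_union hdisj, sum_image hinj, sum_insert ha,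
      sum_congr rfl fun B hB => prod_insert (haB B hB), ← mul_sum]
    calc ∑ A ∈ s.powersetCard (n + 1), ∏ x ∈ A, w x + w a * ∑ B ∈ s.powersetCard n, ∏ x ∈ B, w x
        ≤ (∑ x ∈ s, w x) ^ (n + 1) + w a * (∑ x ∈ s, w x) ^ n := by
          gcongr
          exacts [ih (n + 1), hw a, ih n]
      _ = (∑ x ∈ s, w x + w a) * (∑ x ∈ s, w x) ^ n := by ring
      _ ≤ (w a + ∑ x ∈ s, w x) ^ (n + 1) := by
          rw [pow_succ', add_comm (w a)]
          gcongr
          exacts [add_nonneg hS (hw a), le_add_of_nonneg_right (hw a)]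

def IsDisperser {α β : Type*} [DecidableEq β] (m : ℕ) (F : α → Finset β) : Prop :=
  ∀ A : Finset α, m ≤ A.card → m ≤ (A.biUnion F).card

section RandomGraph

variable {ι β : Type*} [Fintype ι] [DecidableEq ι] [Fintype β]

/-- A point `ω` of the sample space chooses `d x` neighbours of each `x`; `trapped d T A` is
the event that all neighbours of `A` lie in `T`. -/
def trapped (d : ι → ℕ) (T : Finset β) (A : Finset ι) : Finset (∀ x, Fin (d x) → β) :=
  Fintype.piFinset fun x => if x ∈ A then Fintype.piFinset fun _ => T else univ

lemma card_trapped [Nonempty β] (d : ι → ℕ) (T : Finset β) (A : Finset ι) :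
    ((trapped d T A).card : ℝ) =
      Fintype.card (∀ x, Fin (d x) → β) * ∏ x ∈ A, ((T.card : ℝ) / Fintype.card β) ^ d x := by
  have hβ : (Fintype.card β : ℝ) ≠ 0 := by positivity
  have hx : ∀ x, ((if x ∈ A then Fintype.piFinset (fun _ : Fin (d x) => T) else univ).card : ℝ) =
      (Fintype.card β : ℝ) ^ d x * if x ∈ A then ((T.card : ℝ) / Fintype.card β) ^ d x else 1 := by
    intro x
    split_ifs
    · rw [Fintype.card_piFinset, ← mul_pow, mul_div_cancel₀ _ hβ]
      simp
    · simp
  rw [trapped, Fintype.card_piFinset, Nat.cast_prod, prod_congr rfl fun x _ => hx x,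
    prod_mul_distrib, Fintype.prod_ite_mem, Fintype.card_pi]
  simp

variable [DecidableEq β]

lemma exists_mem_trapped_of_card_biUnion_lt {d : ι → ℕ} {m : ℕ} (hm : m - 1 ≤ Fintype.card β)
    (ω : ∀ x, Fin (d x) → β) {A : Finset ι} (hA : m ≤ A.card)
    (hlt : (A.biUnion fun x => univ.image (ω x)).card < m) :
    ∃ T ∈ (univ : Finset β).powersetCard (m - 1), ∃ A' ∈ (univ : Finset ι).powersetCard m,
      ω ∈ trapped d T A' := by
  obtain ⟨A', hA'A, hA'⟩ := exists_subset_card_eq hA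
  have hle : (A'.biUnion fun x => univ.image (ω x)).card ≤ m - 1 := by
    have := card_le_card (biUnion_subset_biUnion_of_subset_left (fun x => univ.image (ω x)) hA'A)
    omega
  obtain ⟨T, hT, hTcard⟩ := exists_superset_card_eq hle hm
  refine ⟨T, mem_powersetCard_univ.2 hTcard, A', mem_powersetCard_univ.2 hA', ?_⟩
  simp only [trapped, Fintype.mem_piFinset]
  intro x
  split_ifs with hx
  · simp only [Fintype.mem_piFinset]
    exact fun i => hT (mem_biUnion.2 ⟨x, hx, mem_image_of_mem _ (mem_univ i)⟩)
  · exact mem_univ _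

theorem exists_isDisperser_of_choose_mul_lt_one (d : ι → ℕ) {m : ℕ} (hm : m ≤ Fintype.card β)
    (h : ((Fintype.card β).choose (m - 1) : ℝ) *
      (∑ x, (((m - 1 : ℕ) : ℝ) / Fintype.card β) ^ d x) ^ m < 1) :
    ∃ F : ι → Finset β, (∀ x, (F x).card ≤ d x) ∧ IsDisperser m F := by
  have hm0 : m ≠ 0 := by
    rintro rfl
    simp at h
  have : Nonempty β := Fintype.card_pos_iff.1 (by omega)
  by_contra! hbad
  set r : ℝ := ((m - 1 : ℕ) : ℝ) / Fintype.card β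
  set 𝒯 := (univ : Finset β).powersetCard (m - 1)
  set 𝒜 := (univ : Finset ι).powersetCard m
  have hcover : (univ : Finset (∀ x, Fin (d x) → β)) ⊆
      𝒯.biUnion fun T => 𝒜.biUnion (trapped d T) := by
    intro ω _
    have hnot := hbad (fun x => univ.image (ω x)) fun x => card_image_le.trans (by simp)
    simp only [IsDisperser, not_forall, not_le, exists_prop] at hnot
    obtain ⟨A, hA, hlt⟩ := hnot
    obtain ⟨T, hT, A', hA', hω⟩ := exists_mem_trapped_of_card_biUnion_lt (by omega) ω hA hlt
    exact mem_biUnion.2 ⟨T, hT, mem_biUnion.2 ⟨A', hA', hω⟩⟩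
  set N := Fintype.card (∀ x, Fin (d x) → β) with hNdef
  have hN : (0 : ℝ) < N := by exact_mod_cast Fintype.card_pos
  have key : (N : ℝ) ≤ N * (((Fintype.card β).choose (m - 1) : ℝ) * (∑ x, r ^ d x) ^ m) :=
    calc (N : ℝ) ≤ ∑ T ∈ 𝒯, ∑ A ∈ 𝒜, ((trapped d T A).card : ℝ) := by
          rw [hNdef, ← card_univ]
          exact_mod_cast (card_le_card hcover).trans
            (card_biUnion_le.trans (sum_le_sum fun T _ => card_biUnion_le))
      _ = ∑ T ∈ 𝒯, (N : ℝ) * ∑ A ∈ 𝒜, ∏ x ∈ A, r ^ d x := by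
          refine sum_congr rfl fun T hT => ?_
          rw [mul_sum]
          refine sum_congr rfl fun A _ => ?_
          rw [card_trapped, mem_powersetCard_univ.1 hT]
      _ ≤ ∑ T ∈ 𝒯, (N : ℝ) * (∑ x, r ^ d x) ^ m := by
          gcongr
          exact sum_powersetCard_prod_le_pow _ (fun x => by positivity) m
      _ = (N : ℝ) * (((Fintype.card β).choose (m - 1) : ℝ) * (∑ x, r ^ d x) ^ m) := by
          rw [sum_const, card_powersetCard, card_univ, nsmul_eq_mul]
          ring
  exact key.not_gt (mul_lt_of_lt_one_right hN h)

end RandomGraph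

lemma IsDisperser.dite {α β : Type*} [DecidableEq α] [DecidableEq β] {D : Finset α} {F : D → Finset β}
    {R₀ : Finset β} {m : ℕ} (hF : IsDisperser m F) (hR₀ : m ≤ R₀.card) :
    IsDisperser m fun x => if hx : x ∈ D then F ⟨x, hx⟩ else R₀ := by
  intro S hS
  by_cases hSD : S ⊆ D
  · refine (hF (S.subtype (· ∈ D)) ?_).trans (card_le_card fun y hy => ?_)
    · rwa [card_subtype, filter_true_of_mem hSD]
    · obtain ⟨x, hx, hy⟩ := mem_biUnion.1 hy
      exact mem_biUnion.2 ⟨x.1, mem_subtype.1 hx, by simpa [x.2] using hy⟩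
  · obtain ⟨x, hxS, hxD⟩ := not_subset.1 hSD
    refine hR₀.trans (card_le_card ?_)
    simpa [hxD] using subset_biUnion_of_mem (fun x => if hx : x ∈ D then F ⟨x, hx⟩ else R₀) hxS

def shortStrings (N : ℕ) : Finset (List Bool) :=
  (univ : Finset (Σ n : Fin N, Fin n → Bool)).image fun p => List.ofFn p.2

lemma mem_shortStrings {N : ℕ} {x : List Bool} : x ∈ shortStrings N ↔ x.length < N := by
  constructor
  · simp only [shortStrings, mem_image, mem_univ, true_and]
    rintro ⟨⟨n, f⟩, rfl⟩
    simp
  · intro hx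
    exact mem_image.2 ⟨⟨⟨x.length, hx⟩, x.get⟩, mem_univ _, List.ofFn_get x⟩

lemma sum_shortStrings_half_pow_le (N : ℕ) :
    ∑ x ∈ shortStrings N, (1 / 2 : ℝ) ^ (2 * x.length + 4) ≤ 1 / 8 :=
  calc ∑ x ∈ shortStrings N, (1 / 2 : ℝ) ^ (2 * x.length + 4)
      ≤ ∑ p : Σ n : Fin N, Fin n → Bool, (1 / 2 : ℝ) ^ (2 * (p.1 : ℕ) + 4) := by
        refine (sum_image_le_of_nonneg fun _ _ => by positivity).trans_eq ?_
        simp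
    _ = 1 / 16 * ∑ n ∈ range N, (1 / 2 : ℝ) ^ n := by
        rw [Fintype.sum_sigma, mul_sum, ← Fin.sum_univ_eq_sum_range]
        refine sum_congr rfl fun n _ => ?_
        simp only [sum_const, card_univ, Fintype.card_fun, Fintype.card_bool, Fintype.card_fin,
          nsmul_eq_mul]
        push_cast
        rw [pow_add, pow_mul, ← mul_assoc, ← mul_pow, mul_comm]
        norm_num
    _ ≤ 1 / 16 * 2 := by gcongr; exact sum_geometric_two_le N
    _ = 1 / 8 := by norm_num

lemma exists_isDisperser_shortStrings (k : ℕ) :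
    ∃ F : shortStrings (2 ^ k) → Finset (Fin (2 ^ (k + 1))),
      (∀ x, (F x).card ≤ 2 * x.1.length + 4) ∧ IsDisperser (2 ^ k) F := by
  refine exists_isDisperser_of_choose_mul_lt_one _ (by simp [pow_succ]) ?_
  have hr : ((2 ^ k - 1 : ℕ) : ℝ) / Fintype.card (Fin (2 ^ (k + 1))) ≤ 1 / 2 := by
    rw [Fintype.card_fin, div_le_iff₀ (by positivity), pow_succ]
    push_cast [Nat.one_le_two_pow]
    linarith
  have hsum : ∑ x : shortStrings (2 ^ k), (((2 ^ k - 1 : ℕ) : ℝ) /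
      Fintype.card (Fin (2 ^ (k + 1)))) ^ (2 * x.1.length + 4) ≤ 1 / 8 :=
    calc _ ≤ ∑ x : shortStrings (2 ^ k), (1 / 2 : ℝ) ^ (2 * x.1.length + 4) :=
          sum_le_sum fun x _ => pow_le_pow_left₀ (by positivity) hr _
      _ = ∑ x ∈ shortStrings (2 ^ k), (1 / 2 : ℝ) ^ (2 * x.length + 4) := by
          rw [sum_coe_sort (shortStrings (2 ^ k)) fun x => (1 / 2 : ℝ) ^ (2 * x.length + 4)]
      _ ≤ 1 / 8 := sum_shortStrings_half_pow_le _
  have hchoose : ((Fintype.card (Fin (2 ^ (k + 1)))).choose (2 ^ k - 1) : ℝ) ≤ 4 ^ 2 ^ k :=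
    calc _ ≤ ((2 ^ 2 ^ (k + 1) : ℕ) : ℝ) := by
          rw [Fintype.card_fin]
          exact_mod_cast Nat.choose_le_two_pow _ _
      _ = 4 ^ 2 ^ k := by push_cast; rw [pow_succ, pow_mul']; norm_num
  calc _ ≤ (4 : ℝ) ^ 2 ^ k * (1 / 8) ^ 2 ^ k := by gcongr
    _ = (1 / 2) ^ 2 ^ k := by rw [← mul_pow]; norm_num
    _ < 1 := pow_lt_one₀ (by norm_num) (by norm_num) (by positivity)

lemma exists_isDisperser_listBool (k : ℕ) :
    ∃ G : List Bool → Finset (Fin (2 ^ (k + 1))),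
      (∀ x, (G x).card ≤ 2 * x.length + 4) ∧ IsDisperser (2 ^ k) G := by
  obtain ⟨F, hFdeg, hF⟩ := exists_isDisperser_shortStrings k
  set R₀ : Finset (Fin (2 ^ (k + 1))) :=
    univ.map (Fin.castLEEmb (Nat.pow_le_pow_right two_pos k.le_succ))
  have hR₀ : R₀.card = 2 ^ k := by simp [R₀]
  refine ⟨fun x => if hx : x ∈ shortStrings (2 ^ k) then F ⟨x, hx⟩ else R₀,
    fun x => ?_, hF.dite hR₀.ge⟩
  beta_reduce
  split_ifs with hx
  · exact hFdeg ⟨x, hx⟩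
  · rw [mem_shortStrings, not_lt] at hx
    omega

lemma nbhd_setOf_eq_biUnion {α β : Type*} [DecidableEq β] (P : α → Prop) (G : α → Finset β)
    (S : Finset α) (hS : ∀ x ∈ S, P x) :
    nbhd {p : α × β | P p.1 ∧ p.2 ∈ G p.1} S = ↑(S.biUnion G) := by
  ext y
  simp only [nbhd, Set.mem_ofPred_eq, mem_coe, mem_biUnion]
  exact exists_congr fun x => and_congr_right fun hx => and_iff_right (hS x hx)

/-- core static construction, Lemma 4: There is a polynomial `q` with
natural coefficients such that for every `k ≥ 0` there is a bipartite graph `(L, R, E)`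
where `L` is the set of binary strings of length at least `k`, `|R| = 2^(k+1)`,
every `x ∈ L` has degree at most `q(|x|)` (with `q` independent of `k`), and every
finite `S ⊆ L` with `|S| ≥ 2^k` satisfies `|E(S)| ≥ 2^k`. -/
theorem stmt_7 :
    ∃ q : Polynomial ℕ, ∀ k : ℕ,
      ∃ (β : Type) (R : Set β) (E : Set (List Bool × β)),
        R.Finite ∧ R.ncard = 2 ^ (k + 1) ∧
        (∀ p ∈ E, k ≤ p.1.length ∧ p.2 ∈ R) ∧
        (∀ x : List Bool, k ≤ x.length → (nbhd E {x}).ncard ≤ q.eval x.length) ∧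
        (∀ S : Set (List Bool), (∀ x ∈ S, k ≤ x.length) → S.Finite →
          2 ^ k ≤ S.ncard → 2 ^ k ≤ (nbhd E S).ncard) := by
  refine ⟨2 * Polynomial.X + 4, fun k => ?_⟩
  obtain ⟨G, hGdeg, hG⟩ := exists_isDisperser_listBool k
  have hnbhd := nbhd_setOf_eq_biUnion (fun x : List Bool => k ≤ x.length) G
  refine ⟨Fin (2 ^ (k + 1)), Set.univ, {p | k ≤ p.1.length ∧ p.2 ∈ G p.1}, Set.finite_univ,
    by simp, fun p hp => ⟨hp.1, trivial⟩, fun x hx => ?_, fun S hSk hSfin hS => ?_⟩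
  · rw [← coe_singleton, hnbhd {x} (by simpa), Set.ncard_coe_finset, singleton_biUnion]
    simpa using hGdeg x
  · obtain ⟨S, rfl⟩ := hSfin.exists_finset_coe
    rw [Set.ncard_coe_finset] at hS
    rw [hnbhd S hSk, Set.ncard_coe_finset]
    exact hG S hS
end

section
/- Let (L, R, E) be a bipartite graph and m a natural number such that every finite subset S ⊆ L with |S| ≥ m satisfies |E(S)| ≥ m. Let X ⊆ L be a finite set with |X| ≤ 2m, let D ⊆ X, and let μ : D → R be an injective function such that μ(x) ∈ E({x}) for every x ∈ D and such that every x ∈ X \ D has all of its neighbors used, i.e. E({x}) ⊆ μ(D). Then |X \ D| ≤ m. -/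
theorem nbhd_subset_iff {α β : Type*} {E : Set (α × β)} {S : Set α} {T : Set β} :
    nbhd E S ⊆ T ↔ ∀ x ∈ S, nbhd E {x} ⊆ T := by
  constructor
  · rintro h x hx y ⟨_, rfl, hxy⟩
    exact h ⟨_, hx, hxy⟩
  · rintro h y ⟨x, hx, hxy⟩
    exact h x hx ⟨x, rfl, hxy⟩

theorem stmt_8_general {α β : Type} (m : ℕ) (L : Set α) (E : Set (α × β))
    (hdisp : ∀ S ⊆ L, S.Finite → m ≤ S.ncard → m ≤ (nbhd E S).ncard)
    (X : Set α) (hXL : X ⊆ L) (hXfin : X.Finite) (hXcard : X.ncard ≤ 2 * m)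
    (D : Set α) (hD : D ⊆ X) (μ : α → β)
    (hinj : Set.InjOn μ D)
    (hfail : ∀ x ∈ X \ D, nbhd E {x} ⊆ μ '' D) :
    (X \ D).ncard ≤ m := by
  -- More than `m` failures leave `|D| < m`, yet their `≥ m` neighbours all lie in `μ(D)`.
  by_contra! hlarge
  have hexpand : m ≤ (nbhd E (X \ D)).ncard :=
    hdisp _ (Set.sdiff_subset.trans hXL) hXfin.sdiff hlarge.le
  have hused : (nbhd E (X \ D)).ncard ≤ D.ncard := by
    rw [← hinj.ncard_image]
    exact Set.ncard_le_ncard (nbhd_subset_iff.2 hfail) ((hXfin.subset hD).image μ)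
  have hsplit : (X \ D).ncard + D.ncard = X.ncard :=
    Set.ncard_sdiff_add_ncard_of_subset hD hXfin
  omega

/-- failure counting for the greedy matching: suppose every finite
`S ⊆ L` with `|S| ≥ m` has `|E(S)| ≥ m`.  Let `X ⊆ L` be finite with `|X| ≤ 2m`,
`D ⊆ X`, and `μ` injective on `D` with `μ x` a neighbor of `x` for `x ∈ D`, such
that every `x ∈ X \ D` has all its neighbors in `μ(D)`.  Then `|X \ D| ≤ m`. -/
theorem stmt_8 {α β : Type} (m : ℕ) (L : Set α) (E : Set (α × β))
    (hdisp : ∀ S ⊆ L, S.Finite → m ≤ S.ncard → m ≤ (nbhd E S).ncard)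
    (X : Set α) (hXL : X ⊆ L) (hXfin : X.Finite) (hXcard : X.ncard ≤ 2 * m)
    (D : Set α) (hD : D ⊆ X) (μ : α → β)
    (hinj : Set.InjOn μ D)
    (hmatch : ∀ x ∈ D, (x, μ x) ∈ E)
    (hfail : ∀ x ∈ X \ D, nbhd E {x} ⊆ μ '' D) :
    (X \ D).ncard ≤ m :=
  stmt_8_general m L E hdisp X hXL hXfin hXcard D hD μ hinj hfail
end

section
/- Let k ≥ 0 be a natural number and L a set. Suppose R_{-1}, R_0, R_1, …, R_{k-1} are pairwise disjoint finite sets with |R_{-1}| = 1 and |R_i| = 2^(i+1) for 0 ≤ i ≤ k-1; let E_{-1} = L × R_{-1}, and for 0 ≤ i ≤ k-1 let E_i ⊆ L × R_i be an edge relation such that every finite subset S ⊆ L with |S| ≥ 2^i satisfies |E_i(S)| ≥ 2^i. Then the bipartite graph (L, R, E) with R = ⋃_{i=-1}^{k-1} R_i and E = ⋃_{i=-1}^{k-1} E_i admits online matchings up to size 2^k. -/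
/-- A bipartite graph with left vertices `L` and edge relation `E` admits online
matchings up to size `s` if there is a strategy `g`, mapping each finite sequence of
pairwise distinct left vertices to a right vertex, such that for every sequence
`x₁, …, x_m` of pairwise distinct elements of `L` with `m ≤ s`, setting
`y_j = g(x₁, …, x_j)`, every `y_j` is a neighbor of `x_j` and the `y_j` are pairwise
distinct. -/
def AdmitsOnlineMatching {α β : Type*} (L : Set α) (E : Set (α × β)) (s : ℕ) : Prop :=
  ∃ g : List α → β,
    ∀ xs : List α, xs.Nodup → (∀ x ∈ xs, x ∈ L) → xs.length ≤ s →
      (∀ i : Fin xs.length, (xs.get i, g (xs.take (i + 1))) ∈ E) ∧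
      (∀ i j : Fin xs.length, i ≠ j → g (xs.take (i + 1)) ≠ g (xs.take (j + 1)))

/-!
The greedy strategy matches each arriving `x` to a free neighbour at the highest level `i < k`
where one exists, and to the unique vertex `y₀` of `R₋₁` otherwise. A vertex matched at level `l`,
or to `y₀`, thus has no free neighbour at any level above `l`. Suppose `y₀` is already used. Then
the vertices matched below level `i` (to `y₀` or at a level `< i`) have all their level-`i`
neighbours in use; by expansion there are at least as many of those as vertices below level `i`,
so the number of vertices below level `i` doubles from one level to the next, starting from `1`.
Hence `y₀` cannot be requested twice within the first `2 ^ k` arrivals.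
-/

namespace OnlineMatching

open Classical

variable {α β : Type*}

/-- Sequences of left vertices and histories are listed newest first: `history f (x :: t)`
extends `history f t` by the pair that the step `f` assigns to the newly arrived `x`. -/
def history (f : List (α × β) → α → β) : List α → List (α × β)
  | [] => []
  | x :: t => (x, f (history f t) x) :: history f t

section History

variable (f : List (α × β) → α → β)

@[simp]
lemma history_nil : history f [] = [] := rfl

@[simp]
lemma history_cons (x : α) (t : List α) :
    history f (x :: t) = (x, f (history f t) x) :: history f t := rfl

@[simp]
lemma length_history (t : List α) : (history f t).length = t.length := by
  induction t with
  | nil => rfl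
  | cons x t ih => simp [ih]

@[simp]
lemma map_fst_history (t : List α) : (history f t).map Prod.fst = t := by
  induction t with
  | nil => rfl
  | cons x t ih => simp [ih]

lemma history_drop (t : List α) (j : ℕ) : history f (t.drop j) = (history f t).drop j := by
  induction t generalizing j with
  | nil => simp
  | cons x t ih => cases j <;> simp [ih]

lemma history_mem_and_nodup {L : Set α} {E : Set (α × β)} {s : ℕ}
    (hf : ∀ x t, (x :: t).Nodup → (∀ z ∈ x :: t, z ∈ L) → (x :: t).length ≤ s →
      (x, f (history f t) x) ∈ E ∧ f (history f t) x ∉ (history f t).map Prod.snd)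
    (t : List α) (ht : t.Nodup) (htL : ∀ z ∈ t, z ∈ L) (hlen : t.length ≤ s) :
    (∀ p ∈ history f t, p ∈ E) ∧ ((history f t).map Prod.snd).Nodup := by
  induction t with
  | nil => simp
  | cons x t ih =>
    obtain ⟨hE, hfresh⟩ := hf x t ht htL hlen
    obtain ⟨ihE, ihnd⟩ := ih (List.nodup_cons.mp ht).2 (fun z hz => htL z (.tail x hz))
      (by simp at hlen; omega)
    exact ⟨by simpa [hE] using ihE, by simpa [hfresh] using ihnd⟩

lemma fst_getElem_history (t : List α) (j : ℕ) (hj : j < (history f t).length) :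
    (history f t)[j].1 = t[j]'(by simpa using hj) := by
  induction t generalizing j with
  | nil => simp at hj
  | cons x t ih => cases j <;> simp [ih]

lemma getElem_history_reverse (d : β) (xs : List α) (i : ℕ) (hi : i < xs.length) :
    (history f xs.reverse)[xs.length - 1 - i]'(by simp; omega) =
      (xs[i], ((history f (xs.take (i + 1)).reverse).map Prod.snd).headD d) := by
  have hj : xs.length - 1 - i < (history f xs.reverse).length := by simp; omega
  have hdrop : (xs.take (i + 1)).reverse = xs.reverse.drop (xs.length - 1 - i) := by
    rw [List.reverse_take]; congr 1; omega
  ext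
  · rw [fst_getElem_history, List.getElem_reverse]; congr 1; omega
  · rw [hdrop, history_drop, List.map_drop, List.headD_eq_head?_getD, List.head?_drop,
      List.getElem?_map, List.getElem?_eq_getElem hj]
    rfl

end History

theorem admitsOnlineMatching_of_history [Nonempty β] {L : Set α} {E : Set (α × β)} {s : ℕ}
    (f : List (α × β) → α → β)
    (hf : ∀ x t, (x :: t).Nodup → (∀ z ∈ x :: t, z ∈ L) → (x :: t).length ≤ s →
      (x, f (history f t) x) ∈ E ∧ f (history f t) x ∉ (history f t).map Prod.snd) :
    AdmitsOnlineMatching L E s := by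
  let d : β := Classical.arbitrary β
  refine ⟨fun xs => ((history f xs.reverse).map Prod.snd).headD d, fun xs hnd hL hlen => ?_⟩
  obtain ⟨hE, hsnd⟩ := history_mem_and_nodup f hf xs.reverse (List.nodup_reverse.mpr hnd)
    (by simpa using hL) (by simpa using hlen)
  have key := getElem_history_reverse f d xs
  refine ⟨fun i => ?_, fun i j hij heq => hij ?_⟩
  · rw [List.get_eq_getElem, ← key i i.2]
    exact hE _ (List.getElem_mem _)
  · have hsnd_eq (m : Fin xs.length) : ((history f (xs.take (m + 1)).reverse).map Prod.snd).headD d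
        = ((history f xs.reverse).map Prod.snd)[xs.length - 1 - m]'(by simp; omega) := by
      rw [List.getElem_map, key m m.2]
    dsimp only at heq
    rw [hsnd_eq, hsnd_eq, hsnd.getElem_inj_iff] at heq
    exact Fin.ext (by omega)

noncomputable def greedyChoice (E : ℕ → Set (α × β)) (y₀ : β) (used : Set β) (x : α) : ℕ → β
  | 0 => y₀
  | n + 1 => if h : ∃ y, (x, y) ∈ E n ∧ y ∉ used then h.choose else greedyChoice E y₀ used x n

lemma greedyChoice_spec (E : ℕ → Set (α × β)) (y₀ : β) (used : Set β) (x : α) (n : ℕ) :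
    (greedyChoice E y₀ used x n = y₀ ∧ ∀ i < n, ∀ y, (x, y) ∈ E i → y ∈ used) ∨
    ∃ l < n, (x, greedyChoice E y₀ used x n) ∈ E l ∧ greedyChoice E y₀ used x n ∉ used ∧
      ∀ i, l < i → i < n → ∀ y, (x, y) ∈ E i → y ∈ used := by
  induction n with
  | zero => simp [greedyChoice]
  | succ n ih =>
    by_cases h : ∃ y, (x, y) ∈ E n ∧ y ∉ used
    · rw [greedyChoice, dif_pos h]
      exact .inr ⟨n, n.lt_succ_self, h.choose_spec.1, h.choose_spec.2, fun i h₁ h₂ => by omega⟩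
    · have hsat_n (y : β) (hy : (x, y) ∈ E n) : y ∈ used := by_contra fun hy' => h ⟨y, hy, hy'⟩
      have hsat (i : ℕ) (hi : i < n + 1) (h' : i < n → ∀ y, (x, y) ∈ E i → y ∈ used) :
          ∀ y, (x, y) ∈ E i → y ∈ used := by
        rcases (Nat.lt_succ_iff_lt_or_eq.mp hi) with hi | rfl
        exacts [h' hi, hsat_n]
      rw [greedyChoice, dif_neg h]
      rcases ih with ⟨hc, hall⟩ | ⟨l, hl, hE, hfree, habove⟩
      · exact .inl ⟨hc, fun i hi => hsat i hi (hall i)⟩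
      · exact .inr ⟨l, by omega, hE, hfree, fun i h₁ h₂ => hsat i h₂ (habove i h₁)⟩

section Counting

variable {k : ℕ} {R : ℕ → Set β} {E : ℕ → Set (α × β)}

/-- `p` counts as matched below level `i` when `p.2` lies in no `R l` with `i ≤ l < k`; this
covers the pairs matched outside all levels. -/
def LevelSaturated (k : ℕ) (R : ℕ → Set β) (E : ℕ → Set (α × β)) (used : Set β)
    (p : α × β) : Prop :=
  ∀ i < k, (∀ l, i ≤ l → l < k → p.2 ∉ R l) → ∀ y, (p.1, y) ∈ E i → y ∈ used

lemma LevelSaturated.mono {used used' : Set β} {p : α × β} (h : LevelSaturated k R E used p)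
    (hsub : used ⊆ used') : LevelSaturated k R E used' p :=
  fun i hi hp y hy => hsub (h i hi hp y hy)

variable (k R) in
noncomputable def pairsBelow (P : Finset (α × β)) (i : ℕ) : Finset (α × β) :=
  P.filter fun p => ∀ l, i ≤ l → l < k → p.2 ∉ R l

variable {P : Finset (α × β)}

lemma two_pow_le_card_filter_mem
    (hE : ∀ i < k, ∀ p ∈ E i, p.2 ∈ R i)
    (hexp : ∀ i < k, ∀ S : Set α, S.Finite → 2 ^ i ≤ S.ncard → 2 ^ i ≤ (nbhd (E i) S).ncard)
    (hinj : Set.InjOn Prod.fst (P : Set (α × β)))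
    (hsat : ∀ p ∈ P, LevelSaturated k R E (Prod.snd '' (P : Set (α × β))) p)
    {i : ℕ} (hi : i < k) (hbelow : 2 ^ i ≤ (pairsBelow k R P i).card) :
    2 ^ i ≤ (P.filter fun p => p.2 ∈ R i).card := by
  set A := (pairsBelow k R P i).image Prod.fst
  have hA : A.card = (pairsBelow k R P i).card :=
    Finset.card_image_of_injOn (hinj.mono (Finset.coe_subset.mpr (Finset.filter_subset _ _)))
  have hnbhd : nbhd (E i) A ⊆ ((P.filter fun p => p.2 ∈ R i).image Prod.snd : Finset β) := by
    rintro y ⟨x, hx, hxy⟩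
    obtain ⟨p, hp, rfl⟩ := Finset.mem_image.mp hx
    obtain ⟨hpP, hplow⟩ := Finset.mem_filter.mp hp
    obtain ⟨q, hqP, rfl⟩ := hsat p hpP i hi hplow y hxy
    exact Finset.mem_image.mpr ⟨q, Finset.mem_filter.mpr ⟨hqP, hE i hi (p.1, q.2) hxy⟩, rfl⟩
  calc 2 ^ i ≤ (nbhd (E i) A).ncard :=
        hexp i hi A A.finite_toSet (by rw [Set.ncard_coe_finset, hA]; exact hbelow)
    _ ≤ ((P.filter fun p => p.2 ∈ R i).image Prod.snd).card := by
        rw [← Set.ncard_coe_finset]; exact Set.ncard_le_ncard hnbhd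
    _ ≤ (P.filter fun p => p.2 ∈ R i).card := Finset.card_image_le

lemma card_pairsBelow_add_card_filter_mem_le
    (hdisj : ∀ i < k, ∀ j < k, i ≠ j → Disjoint (R i) (R j)) {i : ℕ} (hi : i < k) :
    (pairsBelow k R P i).card + (P.filter fun p => p.2 ∈ R i).card ≤
      (pairsBelow k R P (i + 1)).card := by
  rw [← Finset.card_union_of_disjoint]
  · refine Finset.card_le_card fun p hp => ?_
    simp only [pairsBelow, Finset.mem_union, Finset.mem_filter] at hp ⊢
    rcases hp with ⟨hpP, hp⟩ | ⟨hpP, hpR⟩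
    · exact ⟨hpP, fun l hl hlk => hp l (by omega) hlk⟩
    · exact ⟨hpP, fun l hl hlk hpl => (hdisj i hi l hlk (by omega)).ne_of_mem hpR hpl rfl⟩
  · refine Finset.disjoint_left.mpr fun p hp hpR => ?_
    exact (Finset.mem_filter.mp hp).2 i le_rfl hi (Finset.mem_filter.mp hpR).2

theorem two_pow_le_card_of_levelSaturated
    (hE : ∀ i < k, ∀ p ∈ E i, p.2 ∈ R i)
    (hdisj : ∀ i < k, ∀ j < k, i ≠ j → Disjoint (R i) (R j))
    (hexp : ∀ i < k, ∀ S : Set α, S.Finite → 2 ^ i ≤ S.ncard → 2 ^ i ≤ (nbhd (E i) S).ncard)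
    (hinj : Set.InjOn Prod.fst (P : Set (α × β)))
    (hsat : ∀ p ∈ P, LevelSaturated k R E (Prod.snd '' (P : Set (α × β))) p)
    (hbot : ∃ p ∈ P, ∀ l < k, p.2 ∉ R l) :
    2 ^ k ≤ P.card := by
  have hbelow (i : ℕ) (hi : i ≤ k) : 2 ^ i ≤ (pairsBelow k R P i).card := by
    induction i with
    | zero =>
      obtain ⟨p, hpP, hp⟩ := hbot
      exact Finset.card_pos.mpr ⟨p, Finset.mem_filter.mpr ⟨hpP, fun l _ => hp l⟩⟩
    | succ i ih =>
      have ih := ih (by omega)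
      calc 2 ^ (i + 1) = 2 ^ i + 2 ^ i := by ring
        _ ≤ (pairsBelow k R P i).card + (P.filter fun p => p.2 ∈ R i).card :=
          Nat.add_le_add ih (two_pow_le_card_filter_mem hE hexp hinj hsat (by omega) ih)
        _ ≤ _ := card_pairsBelow_add_card_filter_mem_le hdisj (by omega)
  exact (hbelow k le_rfl).trans (Finset.card_filter_le _ _)

end Counting

section Greedy

variable {k : ℕ} {R : ℕ → Set β} {E : ℕ → Set (α × β)} {y₀ : β}

noncomputable def greedyStep (k : ℕ) (E : ℕ → Set (α × β)) (y₀ : β) (h : List (α × β))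
    (x : α) : β :=
  greedyChoice E y₀ (Prod.snd '' {p | p ∈ h}) x k

lemma levelSaturated_history_greedyStep (hE : ∀ i < k, ∀ p ∈ E i, p.2 ∈ R i) (t : List α) :
    ∀ p ∈ history (greedyStep k E y₀) t,
      LevelSaturated k R E (Prod.snd '' {q | q ∈ history (greedyStep k E y₀) t}) p := by
  induction t with
  | nil => simp
  | cons x t ih =>
    have hsub : Prod.snd '' {q | q ∈ history (greedyStep k E y₀) t} ⊆
        Prod.snd '' {q | q ∈ history (greedyStep k E y₀) (x :: t)} :=
      Set.image_mono fun q hq => List.mem_cons_of_mem _ hq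
    intro p hp
    rcases List.mem_cons.mp hp with rfl | hp
    · intro i hi hbelow y hy
      refine hsub ?_
      rcases greedyChoice_spec E y₀ (Prod.snd '' {q | q ∈ history (greedyStep k E y₀) t}) x k
        with ⟨_, hall⟩ | ⟨l, hl, hxE, _, habove⟩
      · exact hall i hi y hy
      · have hli : l < i := by
          by_contra
          exact hbelow l (by omega) hl (hE l hl _ hxE)
        exact habove i hli hi y hy
    · exact (ih p hp).mono hsub

/-- The only way the greedy step can fail is to reuse `y₀`, and the counting argument rules
that out before step `2 ^ k`. -/
lemma greedyStep_mem_and_not_mem (hy₀ : ∀ i < k, y₀ ∉ R i)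
    (hE : ∀ i < k, ∀ p ∈ E i, p.2 ∈ R i)
    (hdisj : ∀ i < k, ∀ j < k, i ≠ j → Disjoint (R i) (R j))
    (hexp : ∀ i < k, ∀ S : Set α, S.Finite → 2 ^ i ≤ S.ncard → 2 ^ i ≤ (nbhd (E i) S).ncard)
    {t : List α} (ht : t.Nodup) (hlen : t.length < 2 ^ k) (x : α) :
    (greedyStep k E y₀ (history (greedyStep k E y₀) t) x = y₀ ∨
      ∃ i < k, (x, greedyStep k E y₀ (history (greedyStep k E y₀) t) x) ∈ E i) ∧
    greedyStep k E y₀ (history (greedyStep k E y₀) t) x ∉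
      (history (greedyStep k E y₀) t).map Prod.snd := by
  set H := history (greedyStep k E y₀) t
  set c := greedyStep k E y₀ H x
  have hspec : (c = y₀ ∧ _) ∨ ∃ l < k, (x, c) ∈ E l ∧ c ∉ Prod.snd '' {q | q ∈ H} ∧ _ :=
    greedyChoice_spec E y₀ (Prod.snd '' {q | q ∈ H}) x k
  rcases hspec with ⟨hc, -⟩ | ⟨l, hl, hxE, hfree, -⟩
  · refine ⟨.inl hc, fun hmem => ?_⟩
    obtain ⟨p, hpH, hp⟩ := List.mem_map.mp hmem
    have hinj : Set.InjOn Prod.fst (H.toFinset : Set (α × β)) := fun p hp q hq =>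
      List.inj_on_of_nodup_map (by simpa [H] using ht) (List.mem_toFinset.mp hp)
        (List.mem_toFinset.mp hq)
    have hsat (q : α × β) (hq : q ∈ H.toFinset) :
        LevelSaturated k R E (Prod.snd '' (H.toFinset : Set (α × β))) q := by
      rw [List.coe_toFinset]
      exact levelSaturated_history_greedyStep hE t q (List.mem_toFinset.mp hq)
    have hcard := two_pow_le_card_of_levelSaturated hE hdisj hexp hinj hsat
      ⟨p, List.mem_toFinset.mpr hpH, by rw [hp, hc]; exact hy₀⟩
    have hH : H.length = t.length := length_history _ t
    have := H.toFinset_card_le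
    omega
  · exact ⟨.inr ⟨l, hl, hxE⟩, fun hmem => hfree (by simpa using hmem)⟩

end Greedy

end OnlineMatching

theorem stmt_9_general {α β : Type} (k : ℕ)
    (Rm1 : Set β) (R : ℕ → Set β)
    (hRm1 : Rm1.ncard = 1)
    (hdisjm1 : ∀ i < k, Disjoint Rm1 (R i))
    (hdisj : ∀ i < k, ∀ j < k, i ≠ j → Disjoint (R i) (R j))
    (E : ℕ → Set (α × β))
    (hE : ∀ i < k, ∀ p ∈ E i, p.2 ∈ R i)
    (hdisp : ∀ i < k, ∀ S : Set α, S.Finite → 2 ^ i ≤ S.ncard →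
      2 ^ i ≤ (nbhd (E i) S).ncard) :
    AdmitsOnlineMatching (Set.univ : Set α)
      ((Set.univ : Set α) ×ˢ Rm1 ∪ ⋃ i ∈ Set.Iio k, E i) (2 ^ k) := by
  obtain ⟨y₀, rfl⟩ := Set.ncard_eq_one.mp hRm1
  have hy₀ (i : ℕ) (hi : i < k) : y₀ ∉ R i := Set.disjoint_singleton_left.mp (hdisjm1 i hi)
  have : Nonempty β := ⟨y₀⟩
  refine OnlineMatching.admitsOnlineMatching_of_history (OnlineMatching.greedyStep k E y₀)
    fun x t hxt _ hlen => ?_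
  obtain ⟨hedge, hfresh⟩ := OnlineMatching.greedyStep_mem_and_not_mem hy₀ hE hdisj hdisp
    (List.nodup_cons.mp hxt).2 hlen x
  refine ⟨?_, hfresh⟩
  rcases hedge with hc | ⟨i, hi, hxE⟩
  · exact .inl ⟨Set.mem_univ x, hc⟩
  · exact .inr (Set.mem_biUnion hi hxE)

/-- multi-level greedy matching: given pairwise disjoint finite sets
`R₋₁, R 0, …, R (k-1)` with `|R₋₁| = 1` and `|R i| = 2^(i+1)`, the relation
`E₋₁ = L × R₋₁`, and relations `E i ⊆ L × R i` such that every finite `S ⊆ L`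
with `|S| ≥ 2^i` has `|Eᵢ(S)| ≥ 2^i`, the union graph admits online matchings up
to size `2^k`. -/
theorem stmt_9 {α β : Type} (k : ℕ)
    (Rm1 : Set β) (R : ℕ → Set β)
    (hRm1 : Rm1.ncard = 1)
    (hRfin : ∀ i < k, (R i).Finite)
    (hRcard : ∀ i < k, (R i).ncard = 2 ^ (i + 1))
    (hdisjm1 : ∀ i < k, Disjoint Rm1 (R i))
    (hdisj : ∀ i < k, ∀ j < k, i ≠ j → Disjoint (R i) (R j))
    (E : ℕ → Set (α × β))
    (hE : ∀ i < k, ∀ p ∈ E i, p.2 ∈ R i)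
    (hdisp : ∀ i < k, ∀ S : Set α, S.Finite → 2 ^ i ≤ S.ncard →
      2 ^ i ≤ (nbhd (E i) S).ncard) :
    AdmitsOnlineMatching (Set.univ : Set α)
      ((Set.univ : Set α) ×ˢ Rm1 ∪ ⋃ i ∈ Set.Iio k, E i) (2 ^ k) :=
  stmt_9_general k Rm1 R hRm1 hdisjm1 hdisj E hE hdisp
end

section
/- Let k and n be natural numbers with k ≤ n, and let (L, R, E) be a bipartite graph in which L contains every binary string of length n and |R| = 2^k. If (L, R, E) admits online matchings up to size 2^k, then every vertex y ∈ R is a neighbor of strictly more than 2^n − 2^k binary strings of length n. -/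
/-!
Suppose some `y ∈ R` had at most `2^n - 2^k` neighbours of length `n`. Then at least `2^k`
strings of length `n` are not adjacent to `y`. Presenting `2^k` of them to the online
strategy, it must match them to `2^k` distinct right vertices other than `y`, but only
`2^k - 1` are available.
-/

lemma List.ncard_setOf_length_eq (α : Type*) [Fintype α] (n : ℕ) :
    {l : List α | l.length = n}.ncard = Fintype.card α ^ n := by
  rw [← Nat.card_coe_set_eq, ← card_vector, ← Nat.card_eq_fintype_card]
  rfl

namespace AdmitsOnlineMatching

variable {α β : Type*} {L : Set α} {E : Set (α × β)} {s : ℕ}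

lemma exists_injOn (h : AdmitsOnlineMatching L E s) {S : Finset α} (hSL : ↑S ⊆ L)
    (hS : S.card ≤ s) : ∃ f : α → β, Set.InjOn f S ∧ ∀ x ∈ S, (x, f x) ∈ E := by
  classical
  obtain ⟨g, hg⟩ := h
  set xs := S.toList
  obtain ⟨hedge, hdistinct⟩ := hg xs S.nodup_toList (fun x hx => hSL (S.mem_toList.1 hx))
    (by rwa [S.length_toList])
  have hidx : ∀ x ∈ S, xs.idxOf x < xs.length := fun x hx =>
    List.idxOf_lt_length_iff.2 (S.mem_toList.2 hx)
  refine ⟨fun x => g (xs.take (xs.idxOf x + 1)), fun x hx x' hx' hxx' => ?_, fun x hx => ?_⟩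
  · by_contra hne
    refine hdistinct ⟨_, hidx x hx⟩ ⟨_, hidx x' hx'⟩ ?_ hxx'
    exact fun heq => hne ((List.idxOf_inj (S.mem_toList.2 hx)).1 (Fin.mk.inj heq))
  · simpa using hedge ⟨_, hidx x hx⟩

lemma ncard_le_of_forall_mem (h : AdmitsOnlineMatching L E s) {S : Set α} (hSL : S ⊆ L)
    (hS : S.ncard ≤ s) {T : Set β} (hT : T.Finite) (hST : ∀ x ∈ S, ∀ b, (x, b) ∈ E → b ∈ T) :
    S.ncard ≤ T.ncard := by
  obtain hfin | hinf := S.finite_or_infinite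
  · lift S to Finset α using hfin
    rw [Set.ncard_coe_finset] at hS
    obtain ⟨f, hinj, hf⟩ := h.exists_injOn hSL hS
    exact Set.ncard_le_ncard_of_injOn f (fun x hx => hST x hx _ (hf x hx)) hinj hT
  · simp [hinf.ncard]

end AdmitsOnlineMatching

theorem stmt_11_general {β : Type} (k n : ℕ) (hkn : k ≤ n)
    (L : Set (List Bool)) (hL : ∀ x : List Bool, x.length = n → x ∈ L)
    (R : Set β) (hRcard : R.ncard = 2 ^ k)
    (E : Set (List Bool × β)) (hE : ∀ p ∈ E, p.1 ∈ L ∧ p.2 ∈ R)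
    (hOM : AdmitsOnlineMatching L E (2 ^ k)) :
    ∀ y ∈ R, 2 ^ n - 2 ^ k < {x : List Bool | x.length = n ∧ (x, y) ∈ E}.ncard := by
  intro y hy
  by_contra! hfew
  have hR : R.Finite := Set.finite_of_ncard_ne_zero (by simp [hRcard])
  have hnonadj : 2 ^ k ≤ ({x : List Bool | x.length = n} \
      {x | x.length = n ∧ (x, y) ∈ E}).ncard := by
    rw [Set.ncard_sdiff' (fun x hx => hx.1) (List.finite_length_eq Bool n),
      List.ncard_setOf_length_eq, Fintype.card_bool]
    have := Nat.pow_le_pow_right two_pos hkn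
    omega
  obtain ⟨S, hSsub, hScard⟩ := Set.exists_subset_card_eq hnonadj
  have hmatch := hOM.ncard_le_of_forall_mem (T := R \ {y}) (fun x hx => hL x (hSsub hx).1)
    hScard.le hR.sdiff fun x hx b hb =>
      ⟨(hE _ hb).2, by rintro rfl; exact (hSsub hx).2 ⟨(hSsub hx).1, hb⟩⟩
  rw [Set.ncard_sdiff_singleton_of_mem hy, hRcard, hScard] at hmatch
  have := Nat.one_le_two_pow (n := k)
  omega

/-- first step of Makhlin's remark: let `k ≤ n` and `(L, R, E)` be a
bipartite graph with `L` containing every binary string of length `n` and `|R| = 2^k`.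
If it admits online matchings up to size `2^k`, then every `y ∈ R` is a neighbor of
strictly more than `2^n - 2^k` binary strings of length `n`. -/
theorem stmt_11 {β : Type} (k n : ℕ) (hkn : k ≤ n)
    (L : Set (List Bool)) (hL : ∀ x : List Bool, x.length = n → x ∈ L)
    (R : Set β) (hRfin : R.Finite) (hRcard : R.ncard = 2 ^ k)
    (E : Set (List Bool × β)) (hE : ∀ p ∈ E, p.1 ∈ L ∧ p.2 ∈ R)
    (hOM : AdmitsOnlineMatching L E (2 ^ k)) :
    ∀ y ∈ R, 2 ^ n - 2 ^ k < {x : List Bool | x.length = n ∧ (x, y) ∈ E}.ncard :=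
  stmt_11_general k n hkn L hL R hRcard E hE hOM
end
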